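/- arXiv:2602.16615 — 11 statements merged into one kernel-verified Lean document; each statement's English description precedes it below -/
import Mathlib

section
/- Let d ≥ 1 be an integer, let n ∈ {1, …, d}, and let ρ₁, ρ₂, ρ₃ : ℤ → ℝ satisfy Σ_{u∈ℤ} |ρ_i(u)|^n < ∞ for i = 1, 2, 3. Let (j, k, l, m) be any permutation of (1, 2, 3, 4). Then (1/N²) · Σ_{1 ≤ i₁, i₂, i₃, i₄ ≤ N} |ρ₁(i_j − i_k)|^n · |ρ₂(i_k − i_l)| · |ρ₃(i_l − i_m)|^n → 0 as N → ∞. -/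
open Filter

set_option maxHeartbeats 1000000

/-- For `1 ≤ n ≤ d`, kernels `ρ₁, ρ₂, ρ₃ ∈ ℓ^n(ℤ)`, and any permutation
`(j,k,l,m) = (σ 0, σ 1, σ 2, σ 3)` of the four coordinates,
`(1/N²) Σ_{1 ≤ i₁,i₂,i₃,i₄ ≤ N} |ρ₁(i_j − i_k)|^n |ρ₂(i_k − i_l)| |ρ₃(i_l − i_m)|^n → 0`. -/
theorem stmt2 (d : ℕ) (hd : 1 ≤ d) (n : ℕ) (hn1 : 1 ≤ n) (hnd : n ≤ d)
    (ρ₁ ρ₂ ρ₃ : ℤ → ℝ)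
    (h₁ : Summable fun u : ℤ => |ρ₁ u| ^ n)
    (h₂ : Summable fun u : ℤ => |ρ₂ u| ^ n)
    (h₃ : Summable fun u : ℤ => |ρ₃ u| ^ n)
    (σ : Equiv.Perm (Fin 4)) :
    Tendsto (fun N : ℕ =>
      (1 / (N : ℝ) ^ 2) *
        ∑ i ∈ Fintype.piFinset (fun _ : Fin 4 => Finset.Icc (1 : ℤ) (N : ℤ)),
          |ρ₁ (i (σ 0) - i (σ 1))| ^ n * |ρ₂ (i (σ 1) - i (σ 2))| * |ρ₃ (i (σ 2) - i (σ 3))| ^ n)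
      atTop (nhds 0) := by
  -- `|ρ₂|` tends to zero along the cofinite filter
  have hgt : Tendsto (fun u : ℤ => |ρ₂ u|) cofinite (nhds 0) := by
    have h0 := h₂.tendsto_cofinite_zero
    have hcont : ContinuousAt (fun x : ℝ => x ^ ((n : ℝ)⁻¹)) 0 :=
      Real.continuousAt_rpow_const 0 _ (Or.inr (by positivity))
    have hcomp := hcont.tendsto.comp h0
    have hzero : (0 : ℝ) ^ ((n : ℝ)⁻¹) = 0 :=
      Real.zero_rpow (by positivity)
    rw [hzero] at hcomp
    refine hcomp.congr fun u => ?_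
    exact Real.pow_rpow_inv_natCast (abs_nonneg _) (by omega)
  -- Cesàro-type bound for the middle factor
  have hces : Tendsto (fun N : ℕ =>
      (N : ℝ)⁻¹ * ∑ v ∈ Finset.Icc (1 - (N : ℤ)) ((N : ℤ) - 1), |ρ₂ v|)
      atTop (nhds 0) := by
    set g : ℤ → ℝ := fun u => |ρ₂ u| with hgdef
    have hg0 : ∀ u, 0 ≤ g u := fun u => abs_nonneg _
    set a : ℕ → ℝ := fun k => g k + g (-k) with ha
    have hta : Tendsto a atTop (nhds 0) := by
      have hh1 : Tendsto (fun k : ℕ => (k : ℤ)) atTop cofinite := by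
        rw [Int.cofinite_eq]
        exact tendsto_natCast_atTop_atTop.mono_right le_sup_right
      have hh2 : Tendsto (fun k : ℕ => -(k : ℤ)) atTop cofinite := by
        rw [Int.cofinite_eq]
        exact (tendsto_neg_atBot_iff.2 tendsto_natCast_atTop_atTop).mono_right le_sup_left
      have := (hgt.comp hh1).add (hgt.comp hh2)
      simpa using this
    have hc := hta.cesaro
    apply tendsto_of_tendsto_of_tendsto_of_le_of_le' tendsto_const_nhds hc
    · filter_upwards with N
      exact mul_nonneg (by positivity) (Finset.sum_nonneg fun v _ => hg0 v)
    · filter_upwards with N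
      have hsub : Finset.Icc (1 - (N : ℤ)) ((N : ℤ) - 1) ⊆
          (Finset.range N).image (Nat.cast : ℕ → ℤ) ∪
            (Finset.range N).image (fun k : ℕ => -(k : ℤ)) := by
        intro v hv
        simp only [Finset.mem_Icc] at hv
        simp only [Finset.mem_union, Finset.mem_image, Finset.mem_range]
        rcases le_or_gt 0 v with h | h
        · exact Or.inl ⟨v.toNat, by omega, by omega⟩
        · exact Or.inr ⟨(-v).toNat, by omega, by omega⟩
      have hb1 : ∑ v ∈ Finset.Icc (1 - (N : ℤ)) ((N : ℤ) - 1), g v ≤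
          ∑ v ∈ (Finset.range N).image (Nat.cast : ℕ → ℤ) ∪
            (Finset.range N).image (fun k : ℕ => -(k : ℤ)), g v :=
        Finset.sum_le_sum_of_subset_of_nonneg hsub fun v _ _ => hg0 v
      have hb2 : ∑ v ∈ (Finset.range N).image (Nat.cast : ℕ → ℤ) ∪
            (Finset.range N).image (fun k : ℕ => -(k : ℤ)), g v ≤
          ∑ k ∈ Finset.range N, a k := by
        have hui := Finset.sum_union_inter
          (s₁ := (Finset.range N).image (Nat.cast : ℕ → ℤ))
          (s₂ := (Finset.range N).image (fun k : ℕ => -(k : ℤ))) (f := g)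
        have hi1 : ∑ v ∈ (Finset.range N).image (Nat.cast : ℕ → ℤ), g v
            = ∑ k ∈ Finset.range N, g k :=
          Finset.sum_image fun x _ y _ h => by exact_mod_cast h
        have hi2 : ∑ v ∈ (Finset.range N).image (fun k : ℕ => -(k : ℤ)), g v
            = ∑ k ∈ Finset.range N, g (-k) :=
          Finset.sum_image fun x _ y _ h => by omega
        have hnn : 0 ≤ ∑ v ∈ (Finset.range N).image (Nat.cast : ℕ → ℤ) ∩
            (Finset.range N).image (fun k : ℕ => -(k : ℤ)), g v :=
          Finset.sum_nonneg fun v _ => hg0 v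
        rw [ha, Finset.sum_add_distrib]
        linarith [hui, hi1, hi2]
      exact mul_le_mul_of_nonneg_left (hb1.trans hb2) (by positivity)
  -- constants
  set Sf : ℝ := ∑' u : ℤ, |ρ₁ u| ^ n with hSf
  set Sh : ℝ := ∑' u : ℤ, |ρ₃ u| ^ n with hSh
  have hSf0 : 0 ≤ Sf := tsum_nonneg fun u => by positivity
  have hSh0 : 0 ≤ Sh := tsum_nonneg fun u => by positivity
  have hup := hces.const_mul (Sf * Sh)
  rw [mul_zero] at hup
  apply tendsto_of_tendsto_of_tendsto_of_le_of_le' tendsto_const_nhds hup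
  · filter_upwards with N
    exact mul_nonneg (by positivity) (Finset.sum_nonneg fun i _ => by positivity)
  · filter_upwards [eventually_ge_atTop 1] with N hN
    have hNpos : (0 : ℝ) < (N : ℝ) := by exact_mod_cast Nat.pos_of_ne_zero (by omega)
    set A := Finset.Icc (1 - (N : ℤ)) ((N : ℤ) - 1) with hA
    set B := Finset.Icc (1 : ℤ) (N : ℤ) with hB
    set F : ℤ × ℤ × ℤ × ℤ → ℝ :=
      fun y => |ρ₁ y.1| ^ n * |ρ₂ y.2.1| * |ρ₃ y.2.2.1| ^ n with hFdef
    have hF0 : ∀ y, 0 ≤ F y := fun y => by positivity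
    -- step 1: remove σ by reindexing
    have hre : ∑ i ∈ Fintype.piFinset (fun _ : Fin 4 => B),
          |ρ₁ (i (σ 0) - i (σ 1))| ^ n * |ρ₂ (i (σ 1) - i (σ 2))| * |ρ₃ (i (σ 2) - i (σ 3))| ^ n
        = ∑ i ∈ Fintype.piFinset (fun _ : Fin 4 => B),
          F (i 0 - i 1, i 1 - i 2, i 2 - i 3, i 3) := by
      refine Finset.sum_nbij' (fun i => i ∘ σ) (fun i => i ∘ σ.symm) ?_ ?_ ?_ ?_ ?_
      · intro i hi; simp only [Fintype.mem_piFinset] at hi ⊢; exact fun t => hi _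
      · intro i hi; simp only [Fintype.mem_piFinset] at hi ⊢; exact fun t => hi _
      · intro i _; ext t; simp
      · intro i _; ext t; simp
      · intro i _; simp [hFdef, Function.comp]
    -- step 2: inject into difference coordinates
    have himg : ∑ i ∈ Fintype.piFinset (fun _ : Fin 4 => B),
          F (i 0 - i 1, i 1 - i 2, i 2 - i 3, i 3)
        ≤ ∑ y ∈ A ×ˢ A ×ˢ A ×ˢ B, F y := by
      rw [show (∑ i ∈ Fintype.piFinset (fun _ : Fin 4 => B),
            F (i 0 - i 1, i 1 - i 2, i 2 - i 3, i 3))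
          = ∑ y ∈ (Fintype.piFinset (fun _ : Fin 4 => B)).image
              (fun i : Fin 4 → ℤ => (i 0 - i 1, i 1 - i 2, i 2 - i 3, i 3)), F y by
        rw [Finset.sum_image]
        intro x _ y _ hxy
        simp only [Prod.mk.injEq] at hxy
        obtain ⟨e1, e2, e3, e4⟩ := hxy
        have f4 : x 3 = y 3 := e4
        have f3 : x 2 = y 2 := by omega
        have f2 : x 1 = y 1 := by omega
        have f1 : x 0 = y 0 := by omega
        ext t
        fin_cases t
        exacts [f1, f2, f3, f4]]
      apply Finset.sum_le_sum_of_subset_of_nonneg _ fun y _ _ => hF0 y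
      intro y hy
      simp only [Finset.mem_image, Fintype.mem_piFinset, hB, Finset.mem_Icc] at hy
      obtain ⟨i, hi, rfl⟩ := hy
      simp only [Finset.mem_product, hA, hB, Finset.mem_Icc]
      have h0 := hi 0; have h1 := hi 1; have h2 := hi 2; have h3 := hi 3
      refine ⟨⟨by omega, by omega⟩, ⟨by omega, by omega⟩, ⟨by omega, by omega⟩, by omega, by omega⟩
    -- step 3: factor the product sum
    have hprod : ∑ y ∈ A ×ˢ A ×ˢ A ×ˢ B, F y
        = (∑ u ∈ A, |ρ₁ u| ^ n) * (∑ v ∈ A, |ρ₂ v|) * (∑ w ∈ A, |ρ₃ w| ^ n) * (B.card : ℝ) := by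
      simp only [hFdef, Finset.sum_product]
      simp only [Finset.sum_const, nsmul_eq_mul, ← Finset.sum_mul, ← Finset.mul_sum]
      ring
    have hcard : (B.card : ℝ) = (N : ℝ) := by
      rw [hB, Int.card_Icc]
      norm_num
    -- step 4: bound the f and h factors by their tsums
    have hfA : ∑ u ∈ A, |ρ₁ u| ^ n ≤ Sf :=
      Summable.sum_le_tsum A (fun u _ => by positivity) h₁
    have hhA : ∑ w ∈ A, |ρ₃ w| ^ n ≤ Sh :=
      Summable.sum_le_tsum A (fun u _ => by positivity) h₃
    have hfA0 : 0 ≤ ∑ u ∈ A, |ρ₁ u| ^ n := Finset.sum_nonneg fun u _ => by positivity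
    have hgA0 : 0 ≤ ∑ v ∈ A, |ρ₂ v| := Finset.sum_nonneg fun v _ => abs_nonneg _
    have hhA0 : 0 ≤ ∑ w ∈ A, |ρ₃ w| ^ n := Finset.sum_nonneg fun w _ => by positivity
    have hmul : (∑ u ∈ A, |ρ₁ u| ^ n) * (∑ v ∈ A, |ρ₂ v|) * (∑ w ∈ A, |ρ₃ w| ^ n) * (B.card : ℝ)
        ≤ Sf * (∑ v ∈ A, |ρ₂ v|) * Sh * (N : ℝ) := by
      rw [hcard]
      have := mul_le_mul (mul_le_mul (mul_le_mul_of_nonneg_right hfA hgA0) hhA hhA0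
        (mul_nonneg hSf0 hgA0)) (le_refl (N : ℝ)) (le_of_lt hNpos) ?_
      · exact this
      · exact mul_nonneg (mul_nonneg hSf0 hgA0) hSh0
    calc (1 / (N : ℝ) ^ 2) * ∑ i ∈ Fintype.piFinset (fun _ : Fin 4 => B),
          |ρ₁ (i (σ 0) - i (σ 1))| ^ n * |ρ₂ (i (σ 1) - i (σ 2))| * |ρ₃ (i (σ 2) - i (σ 3))| ^ n
        ≤ (1 / (N : ℝ) ^ 2) * (Sf * (∑ v ∈ A, |ρ₂ v|) * Sh * (N : ℝ)) := by
          apply mul_le_mul_of_nonneg_left _ (by positivity)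
          rw [hre]
          exact himg.trans (le_of_eq hprod |>.trans hmul)
      _ = Sf * Sh * ((N : ℝ)⁻¹ * ∑ v ∈ A, |ρ₂ v|) := by
          field_simp
end

section
/- Let E be a separable Banach space and (Ω, 𝓕, ℙ) a probability space. Suppose that for all N, M ∈ ℕ one has a decomposition 𝓐_N = 𝓡_N^M + 𝓑_N^M + 𝓒_N^M + 𝓓_N^M of E-valued random variables on Ω. Assume that for each fixed M: (R1) r^M := limsup_{N→∞} E[‖𝓡_N^M‖²] is finite; (B1) 𝓑_N^M converges in law, as N → ∞, to an E-valued random variable 𝓑^M; (C1) E[‖𝓒_N^M‖²] → 0 as N → ∞; (D1) 𝓓_N^M converges in probability, as N → ∞, to a deterministic element 𝓓^M ∈ E. Assume further, as M → ∞: (R2) r^M → 0; (B2) 𝓑^M converges in law to an E-valued random variable 𝓑; (D2) 𝓓^M → 𝓓 in E. Then 𝓐_N converges in law, as N → ∞, to 𝓑 + 𝓓 (i.e. the pushforward of the law of 𝓑 under the translation x ↦ x + 𝓓). -/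
open Filter MeasureTheory Set
open scoped ENNReal NNReal Topology

/-!
Billingsley's approximation argument. With `Y N M = B N M + D N M`, Slutsky's lemma gives
`Y N M ⇒ 𝓑^M + 𝓓^M` as `N → ∞`, and `𝓑^M + 𝓓^M ⇒ 𝓑 + 𝓓` because an `L`-Lipschitz test function
moves by at most `L ‖𝓓^M - 𝓓‖` under the shift. The error `A N - Y N M = R N M + C N M` is small in
probability by Chebyshev: `limsup_N μ (δ ≤ ‖R + C‖) ≲ r^M / δ²`, which vanishes as `M → ∞`.
For an `L`-Lipschitz `F` of oscillation `K`, replacing `A N` by `Y N M` changes `∫ F ∘ A N` by at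
most `L δ + K μ (δ ≤ ‖A N - Y N M‖)`, so a triangle inequality through `Y N M` and `𝓑^M + 𝓓^M`
proves convergence of `∫ F ∘ A N`; bounded Lipschitz functions already determine weak convergence.
-/

namespace MeasureTheory

section Criteria

variable {ι E Ω' : Type*} {Ω : ι → Type*} [∀ i, MeasurableSpace (Ω i)]
  {μ : ∀ i, Measure (Ω i)} [∀ i, IsProbabilityMeasure (μ i)]
  [MeasurableSpace Ω'] {μ' : Measure Ω'} [IsProbabilityMeasure μ']
  [MeasurableSpace E] {X : ∀ i, Ω i → E} {Z : Ω' → E} {l : Filter ι}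

lemma tendstoInDistribution_iff_forall_integral_tendsto [TopologicalSpace E]
    [OpensMeasurableSpace E] (hX : ∀ i, AEMeasurable (X i) (μ i)) (hZ : AEMeasurable Z μ') :
    TendstoInDistribution X l Z μ μ' ↔ ∀ f : BoundedContinuousFunction E ℝ,
      Tendsto (fun i ↦ ∫ ω, f (X i ω) ∂μ i) l (𝓝 (∫ ω, f (Z ω) ∂μ')) := by
  have hmap : ∀ f : BoundedContinuousFunction E ℝ,
      (∀ i, ∫ x, f x ∂(μ i).map (X i) = ∫ ω, f (X i ω) ∂μ i) ∧
        ∫ x, f x ∂μ'.map Z = ∫ ω, f (Z ω) ∂μ' := fun f ↦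
    ⟨fun i ↦ integral_map (hX i) f.continuous.aestronglyMeasurable,
      integral_map hZ f.continuous.aestronglyMeasurable⟩
  refine ⟨fun h f ↦ ?_, fun h ↦ ⟨hX, hZ, ?_⟩⟩
  · have := ProbabilityMeasure.tendsto_iff_forall_integral_tendsto.1 h.tendsto f
    simpa only [ProbabilityMeasure.coe_mk, (hmap f).1, (hmap f).2] using this
  · refine ProbabilityMeasure.tendsto_iff_forall_integral_tendsto.2 fun f ↦ ?_
    simpa only [ProbabilityMeasure.coe_mk, (hmap f).1, (hmap f).2] using h f

lemma TendstoInDistribution.tendsto_integral_comp [TopologicalSpace E] [OpensMeasurableSpace E]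
    (h : TendstoInDistribution X l Z μ μ') {F : E → ℝ} {C : ℝ} (hF : Continuous F)
    (hC : ∀ x y, dist (F x) (F y) ≤ C) :
    Tendsto (fun i ↦ ∫ ω, F (X i ω) ∂μ i) l (𝓝 (∫ ω, F (Z ω) ∂μ')) :=
  (tendstoInDistribution_iff_forall_integral_tendsto h.forall_aemeasurable
    h.aemeasurable_limit).1 h (.mkOfBound ⟨F, hF⟩ C hC)

lemma tendstoInDistribution_iff_forall_lipschitz_integral_tendsto [PseudoEMetricSpace E]
    [OpensMeasurableSpace E] [l.IsCountablyGenerated]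
    (hX : ∀ i, AEMeasurable (X i) (μ i)) (hZ : AEMeasurable Z μ') :
    TendstoInDistribution X l Z μ μ' ↔ ∀ F : E → ℝ, (∃ C, ∀ x y, dist (F x) (F y) ≤ C) →
      (∃ L, LipschitzWith L F) →
        Tendsto (fun i ↦ ∫ ω, F (X i ω) ∂μ i) l (𝓝 (∫ ω, F (Z ω) ∂μ')) := by
  have hmap : ∀ F : E → ℝ, (∃ L, LipschitzWith L F) →
      (∀ i, ∫ x, F x ∂(μ i).map (X i) = ∫ ω, F (X i ω) ∂μ i) ∧
        ∫ x, F x ∂μ'.map Z = ∫ ω, F (Z ω) ∂μ' := fun F ⟨_, hF⟩ ↦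
    ⟨fun i ↦ integral_map (hX i) hF.continuous.aestronglyMeasurable,
      integral_map hZ hF.continuous.aestronglyMeasurable⟩
  refine ⟨fun h F hFb hF ↦ ?_, fun h ↦ ⟨hX, hZ, ?_⟩⟩
  · have := tendsto_iff_forall_lipschitz_integral_tendsto.1 h.tendsto F hFb hF
    simpa only [ProbabilityMeasure.coe_mk, (hmap F hF).1, (hmap F hF).2] using this
  · refine tendsto_iff_forall_lipschitz_integral_tendsto.2 fun F hFb hF ↦ ?_
    simpa only [ProbabilityMeasure.coe_mk, (hmap F hF).1, (hmap F hF).2] using h F hFb hF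

end Criteria

section Estimates

variable {Ω E : Type*} [MeasurableSpace Ω] {μ : Measure Ω} [MeasurableSpace E]

lemma integrable_comp_of_dist_le [TopologicalSpace E] [OpensMeasurableSpace E] [IsFiniteMeasure μ]
    {F : E → ℝ} {C : ℝ} (hF : Continuous F) (hC : ∀ x y, dist (F x) (F y) ≤ C) {X : Ω → E}
    (hX : AEMeasurable X μ) : Integrable (fun ω ↦ F (X ω)) μ := by
  have := μ.isFiniteMeasure_map X
  exact (integrable_map_measure hF.aestronglyMeasurable hX).1
    ((BoundedContinuousFunction.mkOfBound ⟨F, hF⟩ C hC).integrable (μ.map X))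

variable [SeminormedAddCommGroup E] [BorelSpace E] [SecondCountableTopology E]
  [IsProbabilityMeasure μ]

lemma dist_integral_comp_le {F : E → ℝ} {L : ℝ≥0} {C δ : ℝ} (hF : LipschitzWith L F)
    (hC : ∀ x y, dist (F x) (F y) ≤ C) (hδ : 0 ≤ δ) {X Y : Ω → E} (hX : AEMeasurable X μ)
    (hY : AEMeasurable Y μ) :
    dist (∫ ω, F (X ω) ∂μ) (∫ ω, F (Y ω) ∂μ) ≤ L * δ + C * μ.real {ω | δ ≤ ‖X ω - Y ω‖} := by
  set S := {ω | δ ≤ ‖X ω - Y ω‖}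
  have hS : NullMeasurableSet S μ := nullMeasurableSet_le aemeasurable_const
    (continuous_norm.measurable.comp_aemeasurable (hX.sub hY))
  have hFX := integrable_comp_of_dist_le hF.continuous hC hX
  have hFY := integrable_comp_of_dist_le hF.continuous hC hY
  have hbound : ∀ ω, ‖F (X ω) - F (Y ω)‖ ≤ L * δ + S.indicator (fun _ ↦ C) ω := by
    intro ω
    by_cases hω : ω ∈ S
    · rw [indicator_of_mem hω, ← dist_eq_norm]
      linarith [hC (X ω) (Y ω), mul_nonneg L.coe_nonneg hδ]
    · rw [indicator_of_notMem hω, add_zero]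
      exact hF.norm_sub_le_of_le (not_le.1 hω).le
  have hind : Integrable (S.indicator fun _ ↦ C) μ :=
    (integrable_const C).integrableOn.integrable_indicator₀ hS
  calc dist (∫ ω, F (X ω) ∂μ) (∫ ω, F (Y ω) ∂μ) = ‖∫ ω, F (X ω) - F (Y ω) ∂μ‖ := by
        rw [dist_eq_norm, integral_sub hFX hFY]
    _ ≤ ∫ ω, (L * δ + S.indicator (fun _ ↦ C) ω) ∂μ :=
        norm_integral_le_of_norm_le ((integrable_const _).add hind) (ae_of_all _ hbound)
    _ = L * δ + C * μ.real S := by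
        rw [integral_add (integrable_const _) hind,
          integral_indicator₀ hS, setIntegral_const, integral_const, probReal_univ, smul_eq_mul,
          smul_eq_mul, one_mul, mul_comm C]

end Estimates

section IterTendstoInMeasureZero

variable {ι κ Ω E : Type*} [MeasurableSpace Ω] {μ : Measure Ω} {l : Filter ι} {l' : Filter κ}

/-- Billingsley's condition `lim_M limsup_N μ (δ ≤ ‖X N M‖) = 0` for all `δ > 0`. -/
def IterTendstoInMeasureZero [Norm E] (μ : Measure Ω) (X : ι → κ → Ω → E) (l : Filter ι)
    (l' : Filter κ) : Prop :=
  ∀ δ : ℝ, 0 < δ → ∀ ε : ℝ≥0∞, 0 < ε → ∀ᶠ M in l', ∀ᶠ N in l, μ {ω | δ ≤ ‖X N M ω‖} < ε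

variable [SeminormedAddCommGroup E] {X Y : ι → κ → Ω → E}

lemma IterTendstoInMeasureZero.add (hX : IterTendstoInMeasureZero μ X l l')
    (hY : IterTendstoInMeasureZero μ Y l l') :
    IterTendstoInMeasureZero μ (fun N M ω ↦ X N M ω + Y N M ω) l l' := by
  intro δ hδ ε hε
  have hε2 : 0 < ε / 2 := ENNReal.half_pos hε.ne'
  filter_upwards [hX (δ / 2) (half_pos hδ) _ hε2, hY (δ / 2) (half_pos hδ) _ hε2] with M hXM hYM
  filter_upwards [hXM, hYM] with N hXN hYN
  have hsub : {ω | δ ≤ ‖X N M ω + Y N M ω‖} ⊆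
      {ω | δ / 2 ≤ ‖X N M ω‖} ∪ {ω | δ / 2 ≤ ‖Y N M ω‖} := by
    intro ω hω
    by_contra hnot
    simp only [mem_union, mem_ofPred_eq, not_or, not_le] at hω hnot
    linarith [norm_add_le (X N M ω) (Y N M ω)]
  calc μ {ω | δ ≤ ‖X N M ω + Y N M ω‖}
      ≤ μ {ω | δ / 2 ≤ ‖X N M ω‖} + μ {ω | δ / 2 ≤ ‖Y N M ω‖} :=
        (measure_mono hsub).trans (measure_union_le _ _)
    _ < ε / 2 + ε / 2 := ENNReal.add_lt_add hXN hYN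
    _ = ε := ENNReal.add_halves ε

lemma IterTendstoInMeasureZero.of_lintegral_sq (hX : ∀ N M, AEStronglyMeasurable (X N M) μ)
    (h : ∀ θ : ℝ≥0∞, 0 < θ → ∀ᶠ M in l', ∀ᶠ N in l, ∫⁻ ω, ‖X N M ω‖ₑ ^ 2 ∂μ < θ) :
    IterTendstoInMeasureZero μ X l l' := by
  intro δ hδ ε hε
  set d := ENNReal.ofReal δ ^ 2
  have hd0 : d ≠ 0 := pow_ne_zero 2 (ENNReal.ofReal_pos.2 hδ).ne'
  have hdtop : d ≠ ∞ := by finiteness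
  filter_upwards [h (ε * d) (ENNReal.mul_pos hε.ne' hd0)] with M hM
  filter_upwards [hM] with N hN
  have hsub : {ω | δ ≤ ‖X N M ω‖} ⊆ {ω | d ≤ ‖X N M ω‖ₑ ^ 2} := fun ω hω ↦ by
    rw [mem_ofPred_eq, ← ofReal_norm]
    exact pow_le_pow_left' (ENNReal.ofReal_le_ofReal hω) 2
  calc μ {ω | δ ≤ ‖X N M ω‖} ≤ μ {ω | d ≤ ‖X N M ω‖ₑ ^ 2} := measure_mono hsub
    _ ≤ (∫⁻ ω, ‖X N M ω‖ₑ ^ 2 ∂μ) / d :=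
        meas_ge_le_lintegral_div ((hX N M).enorm.pow_const 2) hd0 hdtop
    _ < ε := ENNReal.div_lt_of_lt_mul hN

end IterTendstoInMeasureZero

lemma eventually_eventually_lt_of_tendsto_limsup {ι κ : Type*} {l : Filter ι} {l' : Filter κ}
    {u : ι → κ → ℝ≥0∞} (h : Tendsto (fun M ↦ limsup (fun N ↦ u N M) l) l' (𝓝 0)) {θ : ℝ≥0∞}
    (hθ : 0 < θ) : ∀ᶠ M in l', ∀ᶠ N in l, u N M < θ := by
  filter_upwards [h.eventually_lt_const hθ] with M hM
  exact eventually_lt_of_limsup_lt hM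

section Approximation

variable {ι κ E Ω Ω₀ : Type*} {Ω' : κ → Type*} [MeasurableSpace Ω] {μ : Measure Ω}
  [IsProbabilityMeasure μ] [∀ M, MeasurableSpace (Ω' M)] {ν : ∀ M, Measure (Ω' M)}
  [∀ M, IsProbabilityMeasure (ν M)] [MeasurableSpace Ω₀] {ν₀ : Measure Ω₀}
  [IsProbabilityMeasure ν₀] [SeminormedAddCommGroup E] [MeasurableSpace E] [BorelSpace E]
  {l : Filter ι} [l.IsCountablyGenerated] {l' : Filter κ}

theorem TendstoInDistribution.add_const_of_tendsto [l'.IsCountablyGenerated]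
    {X : ∀ M, Ω' M → E} {Z : Ω₀ → E} (h : TendstoInDistribution X l' Z ν ν₀) {c : κ → E} {c₀ : E}
    (hc : Tendsto c l' (𝓝 c₀)) :
    TendstoInDistribution (fun M ω ↦ X M ω + c M) l' (fun ω ↦ Z ω + c₀) ν ν₀ := by
  have hX := h.forall_aemeasurable
  have hZ := h.aemeasurable_limit
  rw [tendstoInDistribution_iff_forall_lipschitz_integral_tendsto
    (fun M ↦ (hX M).add_const (c M)) (hZ.add_const c₀)]
  rintro F ⟨C, hC⟩ ⟨L, hF⟩
  have hshift : Tendsto (fun M ↦ ∫ ω, F (X M ω + c₀) ∂ν M) l' (𝓝 (∫ ω, F (Z ω + c₀) ∂ν₀)) :=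
    h.tendsto_integral_comp (hF.continuous.comp (continuous_add_const c₀)) fun x y ↦ hC _ _
  have hbound : ∀ M,
      ‖∫ ω, F (X M ω + c M) ∂ν M - ∫ ω, F (X M ω + c₀) ∂ν M‖ ≤ L * ‖c M - c₀‖ := by
    intro M
    rw [← integral_sub (integrable_comp_of_dist_le hF.continuous hC ((hX M).add_const _))
      (integrable_comp_of_dist_le hF.continuous hC ((hX M).add_const _))]
    refine (norm_integral_le_of_norm_le_const (C := L * ‖c M - c₀‖)
      (ae_of_all _ fun ω ↦ ?_)).trans_eq (by simp)
    simpa only [add_sub_add_left_eq_sub] using hF.norm_sub_le (X M ω + c M) (X M ω + c₀)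
  have hdiff :
      Tendsto (fun M ↦ ∫ ω, F (X M ω + c M) ∂ν M - ∫ ω, F (X M ω + c₀) ∂ν M) l' (𝓝 0) :=
    squeeze_zero_norm hbound (by simpa using ((hc.sub_const c₀).norm.const_mul (L : ℝ)))
  simpa using hdiff.add hshift

/-- Billingsley, *Convergence of Probability Measures*, Theorem 3.2. -/
theorem tendstoInDistribution_of_iterTendstoInMeasureZero_sub [SecondCountableTopology E]
    [l'.NeBot] {X : ι → Ω → E} {Y : ι → κ → Ω → E} {Z : ∀ M, Ω' M → E} {W : Ω₀ → E}
    (hY : ∀ M, TendstoInDistribution (fun N ↦ Y N M) l (Z M) (fun _ ↦ μ) (ν M))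
    (hZ : TendstoInDistribution Z l' W ν ν₀)
    (hXY : IterTendstoInMeasureZero μ (fun N M ω ↦ X N ω - Y N M ω) l l')
    (hX : ∀ N, AEMeasurable (X N) μ) :
    TendstoInDistribution X l W (fun _ ↦ μ) ν₀ := by
  rw [tendstoInDistribution_iff_forall_lipschitz_integral_tendsto hX hZ.aemeasurable_limit]
  rintro F ⟨C, hC⟩ ⟨L, hF⟩
  rw [Metric.tendsto_nhds]
  intro ε hε
  obtain ⟨δ, hδ, hLδ⟩ := exists_pos_mul_lt (by positivity : 0 < ε / 4) L
  obtain ⟨η, hη, hCη⟩ := exists_pos_mul_lt (by positivity : 0 < ε / 4) |C|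
  have hlim : ∀ᶠ M in l', dist (∫ ω, F (Z M ω) ∂ν M) (∫ ω, F (W ω) ∂ν₀) < ε / 4 :=
    Metric.tendsto_nhds.1 (hZ.tendsto_integral_comp hF.continuous hC) _ (by positivity)
  obtain ⟨M, hZM, hXYM⟩ :=
    (hlim.and (hXY δ hδ (ENNReal.ofReal η) (ENNReal.ofReal_pos.2 hη))).exists
  have hYM := (hY M).tendsto_integral_comp hF.continuous hC
  filter_upwards [hXYM, Metric.tendsto_nhds.1 hYM _ (by positivity : 0 < ε / 4)] with N hXYN hYN
  have hXYN' : C * μ.real {ω | δ ≤ ‖X N ω - Y N M ω‖} ≤ ε / 4 :=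
    calc C * μ.real {ω | δ ≤ ‖X N ω - Y N M ω‖} ≤ |C| * η := by
          gcongr
          · exact le_abs_self C
          · exact (ENNReal.toReal_lt_of_lt_ofReal hXYN).le
      _ ≤ ε / 4 := hCη.le
  have hXN := dist_integral_comp_le hF hC hδ.le (hX N) ((hY M).forall_aemeasurable N)
  calc dist (∫ ω, F (X N ω) ∂μ) (∫ ω, F (W ω) ∂ν₀)
      ≤ dist (∫ ω, F (X N ω) ∂μ) (∫ ω, F (Y N M ω) ∂μ)
        + dist (∫ ω, F (Y N M ω) ∂μ) (∫ ω, F (Z M ω) ∂ν M)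
        + dist (∫ ω, F (Z M ω) ∂ν M) (∫ ω, F (W ω) ∂ν₀) := dist_triangle4 _ _ _ _
    _ < ε := by linarith

end Approximation
end MeasureTheory

theorem stmt4_general
    {E : Type*} [NormedAddCommGroup E]
    [TopologicalSpace.SeparableSpace E] [MeasurableSpace E] [BorelSpace E]
    {Ω : Type*} [MeasurableSpace Ω] (μ : Measure Ω) [IsProbabilityMeasure μ]
    {Ω' : ℕ → Type*} [∀ M, MeasurableSpace (Ω' M)]
    (ν : ∀ M, Measure (Ω' M)) [∀ M, IsProbabilityMeasure (ν M)]
    {Ω₀ : Type*} [MeasurableSpace Ω₀] (ν₀ : Measure Ω₀) [IsProbabilityMeasure ν₀]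
    (A : ℕ → Ω → E) (R B C D : ℕ → ℕ → Ω → E)
    (BM : ∀ M : ℕ, Ω' M → E) (Blim : Ω₀ → E) (DM : ℕ → E) (Dlim : E)
    (hAmeas : ∀ N, AEStronglyMeasurable (A N) μ)
    (hRmeas : ∀ N M, AEStronglyMeasurable (R N M) μ)
    (hBmeas : ∀ N M, AEStronglyMeasurable (B N M) μ)
    (hCmeas : ∀ N M, AEStronglyMeasurable (C N M) μ)
    (hDmeas : ∀ N M, AEStronglyMeasurable (D N M) μ)
    (hBMmeas : ∀ M, AEStronglyMeasurable (BM M) (ν M))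
    (hBlimmeas : AEStronglyMeasurable Blim ν₀)
    (hdecomp : ∀ N M ω, A N ω = R N M ω + B N M ω + C N M ω + D N M ω)
    (r : ℕ → ℝ≥0∞)
    (hr : ∀ M, r M = Filter.limsup (fun N => ∫⁻ ω, (‖R N M ω‖₊ : ℝ≥0∞) ^ 2 ∂μ) atTop)
    (hB1 : ∀ M : ℕ, ∀ f : BoundedContinuousFunction E ℝ,
      Tendsto (fun N => ∫ ω, f (B N M ω) ∂μ) atTop (nhds (∫ ω, f (BM M ω) ∂(ν M))))
    (hC1 : ∀ M : ℕ, Tendsto (fun N => ∫⁻ ω, (‖C N M ω‖₊ : ℝ≥0∞) ^ 2 ∂μ) atTop (nhds 0))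
    (hD1 : ∀ M : ℕ, TendstoInMeasure μ (fun N => D N M) atTop (fun _ => DM M))
    (hR2 : Tendsto r atTop (nhds 0))
    (hB2 : ∀ f : BoundedContinuousFunction E ℝ,
      Tendsto (fun M => ∫ ω, f (BM M ω) ∂(ν M)) atTop (nhds (∫ ω, f (Blim ω) ∂ν₀)))
    (hD2 : Tendsto DM atTop (nhds Dlim)) :
    ∀ f : BoundedContinuousFunction E ℝ,
      Tendsto (fun N => ∫ ω, f (A N ω) ∂μ) atTop (nhds (∫ ω, f (Blim ω + Dlim) ∂ν₀)) := by
  have hY : ∀ M, TendstoInDistribution (fun N ↦ B N M + D N M) atTop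
      (fun ω ↦ BM M ω + DM M) (fun _ ↦ μ) (ν M) := fun M ↦
    ((tendstoInDistribution_iff_forall_integral_tendsto (fun N ↦ (hBmeas N M).aemeasurable)
      (hBMmeas M).aemeasurable).2 (hB1 M)).add_of_tendstoInMeasure_const (hD1 M)
      fun N ↦ (hDmeas N M).aemeasurable
  have hZ : TendstoInDistribution (fun M ω ↦ BM M ω + DM M) atTop (fun ω ↦ Blim ω + Dlim) ν ν₀ :=
    ((tendstoInDistribution_iff_forall_integral_tendsto (fun M ↦ (hBMmeas M).aemeasurable)
      hBlimmeas.aemeasurable).2 hB2).add_const_of_tendsto hD2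
  have hR : IterTendstoInMeasureZero μ R atTop atTop := .of_lintegral_sq hRmeas fun _ hθ ↦
    eventually_eventually_lt_of_tendsto_limsup (hR2.congr hr) hθ
  have hC : IterTendstoInMeasureZero μ C atTop atTop := .of_lintegral_sq hCmeas fun _ hθ ↦
    .of_forall fun M ↦ (hC1 M).eventually_lt_const hθ
  have hAY : (fun N M ω ↦ A N ω - (B N M + D N M) ω) = fun N M ω ↦ R N M ω + C N M ω := by
    funext N M ω
    rw [hdecomp, Pi.add_apply]
    abel
  exact (tendstoInDistribution_iff_forall_integral_tendsto (fun N ↦ (hAmeas N).aemeasurable)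
    (hBlimmeas.aemeasurable.add_const Dlim)).1
    (tendstoInDistribution_of_iterTendstoInMeasureZero_sub hY hZ (hAY ▸ hR.add hC)
      fun N ↦ (hAmeas N).aemeasurable)

/-- Proposition `abstract_convergence_statement`.
With the decomposition `𝓐_N = 𝓡_N^M + 𝓑_N^M + 𝓒_N^M + 𝓓_N^M` of E-valued random variables:
(R1) `r^M := limsup_N E[‖𝓡_N^M‖²]` finite; (B1) `𝓑_N^M → 𝓑^M` in law; (C1) `E[‖𝓒_N^M‖²] → 0`;
(D1) `𝓓_N^M → 𝓓^M` (deterministic) in probability; (R2) `r^M → 0`; (B2) `𝓑^M → 𝓑` in law;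
(D2) `𝓓^M → 𝓓`.  Then `𝓐_N → 𝓑 + 𝓓` in law. -/
theorem stmt4
    {E : Type*} [NormedAddCommGroup E] [NormedSpace ℝ E] [CompleteSpace E]
    [TopologicalSpace.SeparableSpace E] [MeasurableSpace E] [BorelSpace E]
    {Ω : Type*} [MeasurableSpace Ω] (μ : Measure Ω) [IsProbabilityMeasure μ]
    {Ω' : ℕ → Type*} [∀ M, MeasurableSpace (Ω' M)]
    (ν : ∀ M, Measure (Ω' M)) [∀ M, IsProbabilityMeasure (ν M)]
    {Ω₀ : Type*} [MeasurableSpace Ω₀] (ν₀ : Measure Ω₀) [IsProbabilityMeasure ν₀]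
    (A : ℕ → Ω → E) (R B C D : ℕ → ℕ → Ω → E)
    (BM : ∀ M : ℕ, Ω' M → E) (Blim : Ω₀ → E) (DM : ℕ → E) (Dlim : E)
    (hAmeas : ∀ N, AEStronglyMeasurable (A N) μ)
    (hRmeas : ∀ N M, AEStronglyMeasurable (R N M) μ)
    (hBmeas : ∀ N M, AEStronglyMeasurable (B N M) μ)
    (hCmeas : ∀ N M, AEStronglyMeasurable (C N M) μ)
    (hDmeas : ∀ N M, AEStronglyMeasurable (D N M) μ)
    (hBMmeas : ∀ M, AEStronglyMeasurable (BM M) (ν M))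
    (hBlimmeas : AEStronglyMeasurable Blim ν₀)
    (hdecomp : ∀ N M ω, A N ω = R N M ω + B N M ω + C N M ω + D N M ω)
    (r : ℕ → ℝ≥0∞)
    (hr : ∀ M, r M = Filter.limsup (fun N => ∫⁻ ω, (‖R N M ω‖₊ : ℝ≥0∞) ^ 2 ∂μ) atTop)
    (hR1 : ∀ M, r M ≠ ⊤)
    (hB1 : ∀ M : ℕ, ∀ f : BoundedContinuousFunction E ℝ,
      Tendsto (fun N => ∫ ω, f (B N M ω) ∂μ) atTop (nhds (∫ ω, f (BM M ω) ∂(ν M))))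
    (hC1 : ∀ M : ℕ, Tendsto (fun N => ∫⁻ ω, (‖C N M ω‖₊ : ℝ≥0∞) ^ 2 ∂μ) atTop (nhds 0))
    (hD1 : ∀ M : ℕ, TendstoInMeasure μ (fun N => D N M) atTop (fun _ => DM M))
    (hR2 : Tendsto r atTop (nhds 0))
    (hB2 : ∀ f : BoundedContinuousFunction E ℝ,
      Tendsto (fun M => ∫ ω, f (BM M ω) ∂(ν M)) atTop (nhds (∫ ω, f (Blim ω) ∂ν₀)))
    (hD2 : Tendsto DM atTop (nhds Dlim)) :
    ∀ f : BoundedContinuousFunction E ℝ,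
      Tendsto (fun N => ∫ ω, f (A N ω) ∂μ) atTop (nhds (∫ ω, f (Blim ω + Dlim) ∂ν₀)) :=
  stmt4_general μ ν ν₀ A R B C D BM Blim DM Dlim hAmeas hRmeas hBmeas hCmeas hDmeas hBMmeas
    hBlimmeas hdecomp r hr hB1 hC1 hD1 hR2 hB2 hD2
end

section
/- Fix integers N ≥ 1, m ≥ 1, a real T > 0, and vectors ξ₀, …, ξ_{N−1} ∈ ℝ^m. Define Z₀ := 0 and Z_i := Σ_{ℓ=0}^{i−1} ξ_ℓ for i = 1, …, N−1, grid points t_i := iT/N for i = 0, …, N, and the piecewise linear path Y_N : [0,T] → ℝ^m by Y_N(t) := (1/√N) · (Z_i + θ(t) ξ_i) for t ∈ [t_i, t_{i+1}), where θ(t) := (Nt/T) − i, together with the piecewise constant derivative g(t) := (√N / T) ξ_i for t ∈ [t_i, t_{i+1}). Then the (componentwise) integral ∫₀^T Y_N(r) ⊗ g(r) dr, an m×m real matrix with (k,ℓ) entry ∫₀^T Y_N(r)_k · g(r)_ℓ dr, equals (1/N) Σ_{0 ≤ i < j ≤ N−1} ξ_i ⊗ ξ_j + (1/(2N)) Σ_{i=0}^{N−1}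 ξ_i ⊗ ξ_i. -/
/-!
On the cell `[iT/N, (i+1)T/N)` the integrand `Y_k g_l` is the affine function
`(1/T) (Z_{i,k} + θ ξ_{i,k}) ξ_{i,l}` of `r`, so its integral is the cell length `T/N` times its
value at the midpoint, where `θ = 1/2`. This gives `(1/N) Z_{i,k} ξ_{i,l} + (1/(2N)) ξ_{i,k} ξ_{i,l}`,
and summing over the cells yields the claim.
-/

open MeasureTheory Set Finset

namespace intervalIntegral

theorem integral_const_add_mul_id (a b c d : ℝ) :
    ∫ x in a..b, (c + d * x) = (b - a) * (c + d * ((a + b) / 2)) := by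
  rw [integral_add (f := fun _ => c) (g := fun x => d * x) intervalIntegrable_const
      ((continuous_const.mul continuous_id).intervalIntegrable _ _),
    integral_const_mul, integral_id, integral_const, smul_eq_mul]
  ring

theorem integral_eq_sum_of_eqOn_Ioo {E : Type*} [NormedAddCommGroup E] [NormedSpace ℝ E]
    {μ : Measure ℝ} [NullSingletonClass μ] {a : ℕ → ℝ} (ha : Monotone a) {n : ℕ}
    {f : ℝ → E} {F : ℕ → ℝ → E}
    (hF : ∀ i < n, IntervalIntegrable (F i) μ (a i) (a (i + 1)))
    (hf : ∀ i < n, EqOn f (F i) (Ioo (a i) (a (i + 1)))) :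
    ∫ x in a 0..a n, f x ∂μ = ∑ i ∈ range n, ∫ x in a i..a (i + 1), F i x ∂μ := by
  have hfF : ∀ i < n, EqOn f (F i) (uIoo (a i) (a (i + 1))) := fun i hi =>
    uIoo_of_le (ha i.le_succ) ▸ hf i hi
  rw [← sum_integral_adjacent_intervals fun i hi =>
    (intervalIntegrable_congr_uIoo (hfF i hi)).mpr (hF i hi)]
  exact sum_congr rfl fun i hi => integral_congr_uIoo (hfF i (mem_range.1 hi))

end intervalIntegral

theorem integral_interpolant_mul_increment_on_cell {N T : ℝ} (hN : 0 < N) (hT : T ≠ 0)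
    (i z x y : ℝ) :
    ∫ r in i * T / N..(i + 1) * T / N,
        (1 / Real.sqrt N) * (z + (N * r / T - i) * x) * (Real.sqrt N / T * y) =
      1 / N * (z * y) + 1 / (2 * N) * (x * y) := by
  have hsqrt : Real.sqrt N ≠ 0 := (Real.sqrt_pos.2 hN).ne'
  have affine : (fun r => (1 / Real.sqrt N) * (z + (N * r / T - i) * x) * (Real.sqrt N / T * y)) =
      fun r => (z - i * x) * y / T + N * x * y / T ^ 2 * r := by
    funext r
    field_simp
    ring
  rw [affine, intervalIntegral.integral_const_add_mul_id]
  field_simp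
  ring

theorem stmt5_general (N m : ℕ) (hN : 1 ≤ N) (T : ℝ) (hT : 0 < T)
    (ξ : ℕ → Fin m → ℝ) (Y g : ℝ → Fin m → ℝ)
    (hY : ∀ i : ℕ, i < N → ∀ t : ℝ, (i : ℝ) * T / N ≤ t → t < ((i : ℝ) + 1) * T / N →
      Y t = fun k => (1 / Real.sqrt N) *
        ((∑ ℓ ∈ Finset.range i, ξ ℓ k) + ((N : ℝ) * t / T - (i : ℝ)) * ξ i k))
    (hg : ∀ i : ℕ, i < N → ∀ t : ℝ, (i : ℝ) * T / N ≤ t → t < ((i : ℝ) + 1) * T / N →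
      g t = fun k => (Real.sqrt N / T) * ξ i k) :
    ∀ k l : Fin m,
      (∫ r in (0 : ℝ)..T, Y r k * g r l) =
        (1 / (N : ℝ)) * (∑ j ∈ Finset.range N, ∑ i ∈ Finset.range j, ξ i k * ξ j l) +
          (1 / (2 * (N : ℝ))) * ∑ i ∈ Finset.range N, ξ i k * ξ i l := by
  intro k l
  have hNpos : (0 : ℝ) < N := by exact_mod_cast hN
  let t : ℕ → ℝ := fun i => i * T / N
  have ht : Monotone t := fun i j hij => by dsimp only [t]; gcongr
  have htN : t N = T := mul_div_cancel_left₀ T hNpos.ne'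
  have cell : ∀ i < N, EqOn (fun r => Y r k * g r l)
      (fun r => (1 / Real.sqrt N) * ((∑ ℓ ∈ range i, ξ ℓ k) + (N * r / T - i) * ξ i k) *
        (Real.sqrt N / T * ξ i l)) (Ioo (t i) (t (i + 1))) := by
    rintro i hi r ⟨hr₁, hr₂⟩
    simp only [t, Nat.cast_succ] at hr₁ hr₂
    simp only [hY i hi r hr₁.le hr₂, hg i hi r hr₁.le hr₂]
  have split := intervalIntegral.integral_eq_sum_of_eqOn_Ioo (μ := volume) ht
    (fun i _ => (by fun_prop : Continuous _).intervalIntegrable _ _) cell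
  simp only [t, htN, CharP.cast_eq_zero, zero_mul, zero_div, Nat.cast_succ,
    integral_interpolant_mul_increment_on_cell hNpos hT.ne'] at split
  rw [split, sum_add_distrib, ← mul_sum, ← mul_sum]
  simp only [sum_mul]

/-- Lemma `conv_cont_case`, deterministic computation.
With `Z_i = Σ_{ℓ<i} ξ_ℓ`, grid `t_i = iT/N`, piecewise linear `Y_N` and its piecewise
constant derivative `g`, one has
`∫₀^T Y_N ⊗ g = (1/N) Σ_{i<j} ξ_i ⊗ ξ_j + (1/(2N)) Σ_i ξ_i ⊗ ξ_i` (entrywise). -/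
theorem stmt5 (N m : ℕ) (hN : 1 ≤ N) (hm : 1 ≤ m) (T : ℝ) (hT : 0 < T)
    (ξ : ℕ → Fin m → ℝ) (Y g : ℝ → Fin m → ℝ)
    (hY : ∀ i : ℕ, i < N → ∀ t : ℝ, (i : ℝ) * T / N ≤ t → t < ((i : ℝ) + 1) * T / N →
      Y t = fun k => (1 / Real.sqrt N) *
        ((∑ ℓ ∈ Finset.range i, ξ ℓ k) + ((N : ℝ) * t / T - (i : ℝ)) * ξ i k))
    (hg : ∀ i : ℕ, i < N → ∀ t : ℝ, (i : ℝ) * T / N ≤ t → t < ((i : ℝ) + 1) * T / N →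
      g t = fun k => (Real.sqrt N / T) * ξ i k) :
    ∀ k l : Fin m,
      (∫ r in (0 : ℝ)..T, Y r k * g r l) =
        (1 / (N : ℝ)) * (∑ j ∈ Finset.range N, ∑ i ∈ Finset.range j, ξ i k * ξ j l) +
          (1 / (2 * (N : ℝ))) * ∑ i ∈ Finset.range N, ξ i k * ξ i l :=
  stmt5_general N m hN T hT ξ Y g hY hg
end

section
/- Let n ≥ 1 be an integer, let s, t ∈ [0, 1] with s < t, let N ≥ 1 be a natural number, and let r₁, …, r_n ∈ {0, 1, …, N−1} be natural numbers. Define U_N^{(n)}(s, t, r₁,…,r_n) as the set of integer tuples (u₁, v₁, u₂, v₂, …, u_n, v_n) satisfying ⌊Ns⌋ ≤ u₁ ≤ v₁ < u₂ ≤ v₂ < u₃ ≤ ⋯ < u_n ≤ v_n ≤ ⌊Nt⌋ − 1 and v_j − u_j = r_j for every j = 1, …, n. Then the cardinality of this set equals the binomial coefficient C((⌊Nt⌋ − ⌊Ns⌋ − Σ_{j=1}^n r_j)₊, n) (where x₊ := max(x, 0)); consequently #U_N^{(n)}(s,t,r) / N^n is bounded uniformly in N and in the r_j, and for each fixed (r₁,…,r_n),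 #U_N^{(n)}(s,t,r) / N^n → (t − s)^n / n! as N → ∞. -/
/-!
Subtracting the partial sums `r₁ + ⋯ + r_{j-1}` from the `u_j` maps the admissible tuples
bijectively onto the strictly increasing `n`-tuples in `[⌊Ns⌋, ⌊Nt⌋ - 1 - ∑ r_j]`, i.e. onto the
`n`-element subsets of an interval with `(⌊Nt⌋ - ⌊Ns⌋ - ∑ r_j)₊` points. The bound and the limit
then follow from `C(k, n) = k (k - 1) ⋯ (k - n + 1) / n! ≤ k ^ n` and `k / N → t - s`.
-/

open Filter Finset Topology

section LinearOrder

variable {α : Type*} [LinearOrder α]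

theorem Fin.strictMono_iff_lt_of_succ_lt {n : ℕ} {z : Fin n → α} :
    StrictMono z ↔ ∀ j : Fin n, ∀ h : (j : ℕ) + 1 < n, z j < z ⟨j + 1, h⟩ := by
  cases n with
  | zero => simp [StrictMono]
  | succ m =>
    rw [Fin.strictMono_iff_lt_succ]
    exact ⟨fun H j h => H ⟨j, by omega⟩, fun H i => H i.castSucc (by simp)⟩

theorem strictMono_and_forall_mem_Icc_iff {n : ℕ} (hn : 0 < n) {z : Fin n → α} {lo hi : α} :
    (StrictMono z ∧ ∀ j, z j ∈ Set.Icc lo hi) ↔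
      lo ≤ z ⟨0, hn⟩ ∧ (∀ j : Fin n, ∀ h : (j : ℕ) + 1 < n, z j < z ⟨j + 1, h⟩) ∧
        z ⟨n - 1, Nat.sub_one_lt_of_lt hn⟩ ≤ hi := by
  rw [Fin.strictMono_iff_lt_of_succ_lt]
  refine ⟨fun ⟨hstep, hmem⟩ => ⟨(hmem _).1, hstep, (hmem _).2⟩, fun ⟨hlo, hstep, hhi⟩ => ?_⟩
  have hmono := (Fin.strictMono_iff_lt_of_succ_lt.2 hstep).monotone
  refine ⟨hstep, fun j => ⟨hlo.trans (hmono ?_), (hmono ?_).trans hhi⟩⟩ <;>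
    simp only [Fin.le_def] <;> omega

theorem ncard_setOf_strictMono_forall_mem (n : ℕ) (s : Set α) :
    {z : Fin n → α | StrictMono z ∧ ∀ j, z j ∈ s}.ncard = (Nat.card s).choose n := by
  let e : {z : Fin n → α | StrictMono z ∧ ∀ j, z j ∈ s} ≃ (Fin n ↪o s) :=
    { toFun z := OrderEmbedding.ofStrictMono (fun j => ⟨z.1 j, z.2.2 j⟩) fun _ _ h => z.2.1 h
      invFun f := ⟨fun j => f j, fun _ _ h => f.strictMono h, fun j => (f j).2⟩
      left_inv _ := rfl
      right_inv _ := rfl }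
  rw [← Nat.card_coe_set_eq, Nat.card_congr (e.trans Set.powersetCard.ofFinEmbEquiv),
    Set.powersetCard.card]

end LinearOrder

theorem Fin.partialSum_last {M : Type*} [AddCommMonoid M] {n : ℕ} (f : Fin n → M) :
    Fin.partialSum f (Fin.last n) = ∑ i, f i := by
  simp [Fin.partialSum, List.take_of_length_le, List.sum_ofFn]

def blockChains (n : ℕ) (hn : 0 < n) (a b : ℤ) (r : Fin n → ℕ) :
    Set ((Fin n → ℤ) × (Fin n → ℤ)) :=
  {p | a ≤ p.1 ⟨0, hn⟩ ∧ (∀ j, p.1 j ≤ p.2 j) ∧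
    (∀ j : Fin n, ∀ h : (j : ℕ) + 1 < n, p.2 j < p.1 ⟨j + 1, h⟩) ∧
    p.2 ⟨n - 1, Nat.sub_one_lt_of_lt hn⟩ ≤ b - 1 ∧ ∀ j, p.2 j - p.1 j = r j}

theorem blockChains_eq_image (n : ℕ) (hn : 0 < n) (a b : ℤ) (r : Fin n → ℕ) :
    let c : Fin n → ℤ := fun j => Fin.partialSum (fun i => (r i : ℤ)) j.castSucc
    blockChains n hn a b r = (fun z => (z + c, z + c + fun j => (r j : ℤ))) ''
      {z | StrictMono z ∧ ∀ j, z j ∈ Set.Icc a (b - 1 - ∑ j, (r j : ℤ))} := by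
  intro c
  have c_zero : c ⟨0, hn⟩ = 0 := Fin.partialSum_zero _
  have c_succ (j : Fin n) (h : (j : ℕ) + 1 < n) : c ⟨j + 1, h⟩ = c j + r j :=
    Fin.partialSum_succ _ j
  have c_last :
      c ⟨n - 1, Nat.sub_one_lt_of_lt hn⟩ + r ⟨n - 1, Nat.sub_one_lt_of_lt hn⟩ = ∑ j, (r j : ℤ) := by
    rw [← Fin.partialSum_last, ← Fin.partialSum_succ]
    congr 1
    ext
    simp only [Fin.val_succ, Fin.val_last]
    omega
  ext ⟨u, v⟩
  simp only [blockChains, Set.mem_ofPred_eq, Set.mem_image, Prod.mk.injEq,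
    strictMono_and_forall_mem_Icc_iff hn]
  constructor
  · rintro ⟨hlo, -, hstep, hhi, hlen⟩
    refine ⟨u - c, ⟨?_, fun j h => ?_, ?_⟩, by simp, ?_⟩
    · simp [c_zero, hlo]
    · have := hstep j h; have := hlen j
      simp only [Pi.sub_apply, c_succ]; omega
    · have := hlen ⟨n - 1, Nat.sub_one_lt_of_lt hn⟩
      simp only [Pi.sub_apply]; omega
    · funext j; have := hlen j; simp; omega
  · rintro ⟨z, ⟨hlo, hstep, hhi⟩, rfl, rfl⟩
    refine ⟨by simp [c_zero, hlo], fun j => by simp, fun j h => ?_, ?_, fun j => by simp⟩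
    · have := hstep j h; simp only [Pi.add_apply, c_succ]; omega
    · simp only [Pi.add_apply]; omega

theorem ncard_blockChains (n : ℕ) (hn : 0 < n) (a b : ℤ) (r : Fin n → ℕ) :
    (blockChains n hn a b r).ncard = (b - a - ∑ j, (r j : ℤ)).toNat.choose n := by
  rw [blockChains_eq_image,
    Set.ncard_image_of_injective _ fun z w h => by simpa using congrArg Prod.fst h,
    ncard_setOf_strictMono_forall_mem]
  simp only [Nat.card_coe_set_eq, Set.ncard_eq_toFinset_card', Set.toFinset_Icc, Int.card_Icc]
  congr 2
  ring

theorem Int.cast_toNat_eq_max {R : Type*} [Ring R] [LinearOrder R] [IsStrictOrderedRing R]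
    (z : ℤ) : ((z.toNat : ℕ) : R) = max (z : R) 0 := by
  exact_mod_cast Int.toNat_eq_max z

theorem toNat_floor_sub_floor_sub_le {a b : ℝ} (hab : a ≤ b) {S : ℤ} (hS : 0 ≤ S) :
    ((⌊b⌋ - ⌊a⌋ - S).toNat : ℝ) ≤ b - a + 1 := by
  rw [Int.cast_toNat_eq_max]
  refine max_le ?_ (by linarith)
  have := Int.floor_le b
  have := Int.sub_one_lt_floor a
  have : (0 : ℝ) ≤ S := by exact_mod_cast hS
  push_cast
  linarith

theorem tendsto_intFloor_natCast_mul_div (x : ℝ) :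
    Tendsto (fun N : ℕ => (⌊N * x⌋ : ℝ) / N) atTop (𝓝 x) := by
  have lower : Tendsto (fun N : ℕ => x - 1 / N) atTop (𝓝 x) := by
    simpa using tendsto_const_nhds.sub (tendsto_const_div_atTop_nhds_zero_nat (1 : ℝ))
  refine tendsto_of_tendsto_of_tendsto_of_le_of_le' lower tendsto_const_nhds ?_ ?_ <;>
    filter_upwards [eventually_gt_atTop 0] with N hN <;>
    have hN' : (0 : ℝ) < N := by exact_mod_cast hN
  · rw [sub_div' hN'.ne', mul_comm]
    exact div_le_div_of_nonneg_right (Int.sub_one_lt_floor _).le hN'.le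
  · rw [div_le_iff₀ hN', mul_comm]
    exact Int.floor_le _

theorem tendsto_choose_div_pow {k : ℕ → ℕ} {c : ℝ} (n : ℕ)
    (hk : Tendsto (fun N => (k N : ℝ) / N) atTop (𝓝 c)) :
    Tendsto (fun N => ((k N).choose n : ℝ) / N ^ n) atTop (𝓝 (c ^ n / n.factorial)) := by
  have factor (i : ℕ) : Tendsto (fun N => ((k N : ℝ) - i) / N) atTop (𝓝 c) := by
    simpa [sub_div] using hk.sub (tendsto_const_div_atTop_nhds_zero_nat (i : ℝ))
  have := (tendsto_finsetProd (range n) fun i _ => factor i).div_const (n.factorial : ℝ)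
  rw [prod_const, card_range] at this
  refine this.congr fun N => ?_
  rw [Nat.cast_choose_eq_descPochhammer_div, descPochhammer_eval_eq_prod_range,
    prod_div_distrib, prod_const, card_range, div_right_comm]

/-- Lemma `simplex_nt`.
Let `U_N^{(n)}(s,t,r)` be the set of tuples `⌊Ns⌋ ≤ u₁ ≤ v₁ < u₂ ≤ v₂ < ⋯ < u_n ≤ v_n ≤ ⌊Nt⌋−1`
with `v_j − u_j = r_j`.  Then its cardinality equals
`C((⌊Nt⌋ − ⌊Ns⌋ − Σ r_j)₊, n)`; consequently `#U/N^n` is uniformly bounded, and for fixed `r`,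
`#U/N^n → (t−s)^n/n!` as `N → ∞`. -/
theorem stmt7 (n : ℕ) (hn : 0 < n) (s t : ℝ)
    (hst : s < t)
    (U : ℕ → (Fin n → ℕ) → Set ((Fin n → ℤ) × (Fin n → ℤ)))
    (hU : ∀ (N : ℕ) (r : Fin n → ℕ), U N r =
      {p | ⌊(N : ℝ) * s⌋ ≤ p.1 ⟨0, hn⟩ ∧
           (∀ j : Fin n, p.1 j ≤ p.2 j) ∧
           (∀ j : Fin n, ∀ h : (j : ℕ) + 1 < n, p.2 j < p.1 ⟨(j : ℕ) + 1, h⟩) ∧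
           p.2 ⟨n - 1, by omega⟩ ≤ ⌊(N : ℝ) * t⌋ - 1 ∧
           ∀ j : Fin n, p.2 j - p.1 j = (r j : ℤ)}) :
    (∀ N : ℕ, 1 ≤ N → ∀ r : Fin n → ℕ, (∀ j, r j ≤ N - 1) →
      (U N r).ncard =
        Nat.choose (⌊(N : ℝ) * t⌋ - ⌊(N : ℝ) * s⌋ - ∑ j : Fin n, (r j : ℤ)).toNat n) ∧
    (∃ Cb : ℝ, ∀ N : ℕ, 1 ≤ N → ∀ r : Fin n → ℕ, (∀ j, r j ≤ N - 1) →
      ((U N r).ncard : ℝ) / (N : ℝ) ^ n ≤ Cb) ∧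
    (∀ r : Fin n → ℕ, Tendsto (fun N : ℕ => ((U N r).ncard : ℝ) / (N : ℝ) ^ n) atTop
      (nhds ((t - s) ^ n / (n.factorial : ℝ)))) := by
  have count (N : ℕ) (r : Fin n → ℕ) : (U N r).ncard =
      (⌊(N : ℝ) * t⌋ - ⌊(N : ℝ) * s⌋ - ∑ j : Fin n, (r j : ℤ)).toNat.choose n := by
    rw [hU]
    exact ncard_blockChains n hn _ _ r
  refine ⟨fun N _ r _ => count N r, ⟨(t - s + 1) ^ n, fun N hN r _ => ?_⟩, fun r => ?_⟩
  · have hN : (1 : ℝ) ≤ N := by exact_mod_cast hN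
    have width := toNat_floor_sub_floor_sub_le
      (mul_le_mul_of_nonneg_left hst.le (by positivity : (0 : ℝ) ≤ N))
      (by positivity : 0 ≤ ∑ j : Fin n, (r j : ℤ))
    rw [count, div_le_iff₀ (by positivity), ← mul_pow]
    refine (Nat.cast_le.2 (Nat.choose_le_pow _ _)).trans ?_
    rw [Nat.cast_pow]
    gcongr
    nlinarith
  · simp_rw [count]
    apply tendsto_choose_div_pow
    have hm : Tendsto
        (fun N : ℕ => ((⌊(N : ℝ) * t⌋ - ⌊(N : ℝ) * s⌋ - ∑ j : Fin n, (r j : ℤ) : ℤ) : ℝ) / N)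
        atTop (𝓝 (t - s)) := by
      simpa [sub_div] using ((tendsto_intFloor_natCast_mul_div t).sub
        (tendsto_intFloor_natCast_mul_div s)).sub (tendsto_const_div_atTop_nhds_zero_nat _)
    rw [← max_eq_left (sub_nonneg.2 hst.le)]
    refine (hm.max tendsto_const_nhds).congr fun N => ?_
    rw [← zero_div (N : ℝ), max_div_div_right (Nat.cast_nonneg N), Int.cast_toNat_eq_max]
end

section
/- Let m ≥ 1 and let T be a tree on the vertex set {1, …, m} (a connected acyclic simple graph). For each edge e of T, fix an orientation e = (u_e, v_e) and a kernel K_e : ℤ → ℝ with Σ_{z∈ℤ} |K_e(z)| < ∞. Then for every N ≥ 1, Σ_{x₁, …, x_m ∈ {0, …, N−1}} ∏_{e ∈ E(T)} |K_e(x_{u_e} − x_{v_e})| ≤ N · ∏_{e ∈ E(T)} ‖K_e‖_{ℓ¹(ℤ)}. -/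
/-!
Fix a root `r` of the tree. Once `x r` is fixed, a configuration `x` is determined by its edge
differences `d i = x (u i) - x (v i)`, since the tree is connected. Hence each of the `N` fibres
`{x | x r = c}` contributes a sum of `∏ i, |K i (d i)|` over distinct vectors `d`. Enlarging
this finite set of vectors to a box `∏ i, t i`, the sum factorises as
`∏ i, ∑_{z ∈ t i} |K i z| ≤ ∏ i, ‖K i‖_{ℓ¹}`.
-/

open Finset

theorem SimpleGraph.Reachable.eq_of_forall_adj {V α : Type*} {G : SimpleGraph V} {f : V → α}
    (hf : ∀ a b, G.Adj a b → f a = f b) {u v : V} (h : G.Reachable u v) : f u = f v := by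
  obtain ⟨w⟩ := h
  induction w with
  | nil => rfl
  | cons hadj _ ih => exact (hf _ _ hadj).trans ih

theorem eq_of_edge_sub_eq {V ι A : Type*} [AddCommGroup A] {ε : ι → V × V}
    (hG : (SimpleGraph.fromEdgeSet (Set.range fun i => s((ε i).1, (ε i).2))).Preconnected)
    {x y : V → A} {r : V} (hr : x r = y r)
    (hd : ∀ i, x (ε i).1 - x (ε i).2 = y (ε i).1 - y (ε i).2) : x = y := by
  funext v
  have hconst : (x - y) r = (x - y) v := (hG r v).eq_of_forall_adj ?_
  · rwa [Pi.sub_apply, Pi.sub_apply, hr, sub_self, eq_comm, sub_eq_zero] at hconst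
  rintro a b ⟨⟨i, hi⟩, -⟩
  rcases Sym2.eq_iff.mp hi with ⟨rfl, rfl⟩ | ⟨rfl, rfl⟩
  · exact sub_eq_sub_iff_sub_eq_sub.mp (hd i)
  · exact (sub_eq_sub_iff_sub_eq_sub.mp (hd i)).symm

theorem sum_prod_le_prod_tsum {ι α : Type*} [Fintype ι] {g : ι → α → ℝ}
    (hg₀ : ∀ i z, 0 ≤ g i z) (hg : ∀ i, Summable (g i)) (s : Finset (ι → α)) :
    ∑ d ∈ s, ∏ i, g i (d i) ≤ ∏ i, ∑' z, g i z := by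
  classical
  let t : ∀ i, Finset α := fun i => s.image (· i)
  have hst : s ⊆ Fintype.piFinset t := fun d hd =>
    Fintype.mem_piFinset.mpr fun i => mem_image_of_mem _ hd
  calc ∑ d ∈ s, ∏ i, g i (d i)
      ≤ ∑ d ∈ Fintype.piFinset t, ∏ i, g i (d i) :=
        sum_le_sum_of_subset_of_nonneg hst fun d _ _ => prod_nonneg fun i _ => hg₀ i (d i)
    _ = ∏ i, ∑ z ∈ t i, g i z := (prod_univ_sum t g).symm
    _ ≤ ∏ i, ∑' z, g i z :=
        prod_le_prod (fun i _ => sum_nonneg fun z _ => hg₀ i z)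
          fun i _ => (hg i).sum_le_tsum _ fun z _ => hg₀ i z

theorem stmt8_general (m : ℕ) (hm : 1 ≤ m)
    (ε : Fin (m - 1) → Fin m × Fin m)
    (htree : (SimpleGraph.fromEdgeSet (Set.range fun i => s((ε i).1, (ε i).2))).IsTree)
    (K : Fin (m - 1) → ℤ → ℝ)
    (hK : ∀ i, Summable fun z : ℤ => |K i z|)
    (N : ℕ) :
    ∑ x ∈ Fintype.piFinset (fun _ : Fin m => Finset.range N),
        ∏ i : Fin (m - 1), |K i ((x (ε i).1 : ℤ) - (x (ε i).2 : ℤ))| ≤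
      (N : ℝ) * ∏ i : Fin (m - 1), ∑' z : ℤ, |K i z| := by
  classical
  set S := Fintype.piFinset fun _ : Fin m => range N
  let root : Fin m := ⟨0, hm⟩
  let δ : (Fin m → ℕ) → Fin (m - 1) → ℤ := fun x i => (x (ε i).1 : ℤ) - x (ε i).2
  have hδ : ∀ c, Set.InjOn δ {x | x root = c} := fun c x hx y hy hxy => by
    have := eq_of_edge_sub_eq htree.connected.preconnected (x := fun v => (x v : ℤ))
      (y := fun v => (y v : ℤ)) (r := root) (by simp [hx.out, hy.out]) (congrFun hxy ·)
    exact funext fun v => Nat.cast_injective (congrFun this v)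
  calc ∑ x ∈ S, ∏ i, |K i (δ x i)|
      = ∑ c ∈ range N, ∑ x ∈ S with x root = c, ∏ i, |K i (δ x i)| :=
        (sum_fiberwise_of_maps_to (fun x hx => Fintype.mem_piFinset.mp hx root) _).symm
    _ ≤ ∑ c ∈ range N, ∏ i, ∑' z, |K i z| := sum_le_sum fun c _ => by
        rw [← sum_image (s := {x ∈ S | x root = c}) (f := fun d => ∏ i, |K i (d i)|)
          ((hδ c).mono fun x hx => (mem_filter.mp hx).2)]
        exact sum_prod_le_prod_tsum (fun i z => abs_nonneg _) hK _
    _ = N * ∏ i, ∑' z, |K i z| := by rw [sum_const, card_range, nsmul_eq_mul]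

/-- Tree convolution bound, Lemma `tree_convolution`.
Let `T` be a tree on `m` vertices, presented by its `m − 1` oriented edges
`ε i = (u_i, v_i)` (pairwise distinct, no loops, generating a tree), each carrying a kernel
`K_i ∈ ℓ¹(ℤ)`.  Then
`Σ_{x : {1..m} → {0..N−1}} ∏_i |K_i(x_{u_i} − x_{v_i})| ≤ N ∏_i ‖K_i‖_{ℓ¹}`. -/
theorem stmt8 (m : ℕ) (hm : 1 ≤ m)
    (ε : Fin (m - 1) → Fin m × Fin m)
    (hne : ∀ i, (ε i).1 ≠ (ε i).2)
    (hinj : Function.Injective fun i => s((ε i).1, (ε i).2))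
    (htree : (SimpleGraph.fromEdgeSet (Set.range fun i => s((ε i).1, (ε i).2))).IsTree)
    (K : Fin (m - 1) → ℤ → ℝ)
    (hK : ∀ i, Summable fun z : ℤ => |K i z|)
    (N : ℕ) (hN : 1 ≤ N) :
    ∑ x ∈ Fintype.piFinset (fun _ : Fin m => Finset.range N),
        ∏ i : Fin (m - 1), |K i ((x (ε i).1 : ℤ) - (x (ε i).2 : ℤ))| ≤
      (N : ℝ) * ∏ i : Fin (m - 1), ∑' z : ℤ, |K i z| :=
  stmt8_general m hm ε htree K hK N
end

section
/- Let n ≥ 1 and p ≥ 1 be integers, let β : {1, …, 2n} → {1, …, p} be a surjection (the block map, with blocks B_ℓ := β^{−1}(ℓ)), and let P = {{a_r, b_r} : r = 1, …, n} with a_r < b_r be a perfect matching of {1, …, 2n}. For each r with β(a_r) ≠ β(b_r), let K_r : ℤ → ℝ satisfy Σ_{z∈ℤ} |K_r(z)| < ∞. Define Λ_N := N^{−n} · Σ_{0 ≤ j₁ < j₂ < ⋯ < j_p ≤ N−1} ∏_{r : β(a_r) ≠ β(b_r)} K_r(j_{β(b_r)} − j_{β(a_r)}). If max_{ℓ=1,…,p}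 |B_ℓ| ≥ 3, then Λ_N → 0 as N → ∞. -/
/-!
Let `G` be the graph on the blocks joining `β (a r)` and `β (b r)`. Root each connected
component of `G` and give every other vertex an edge towards a vertex strictly closer to its
root. The values of `j` at the roots together with the increments of `j` along these forest
edges determine `j`; summing the kernels of the forest edges over their increments costs only
their `ℓ¹` norms, and the remaining kernels are bounded by theirs. Hence the sum of the
absolute values over the whole box `[0, N)ᵖ` is `O(N ^ c)`, where `c` is the number of
components. The map sending a pair to its component is onto, and not injective because a
block with three points meets two different pairs, so `c ≤ n - 1` and `Λ_N = O(1 / N)`.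
-/

open Filter
open scoped Classical

theorem prod_le_prod_mul_prod_sdiff {κ R : Type*} [CommSemiring R] [PartialOrder R]
    [IsOrderedRing R] [DecidableEq κ] {s t : Finset κ} (hts : t ⊆ s)
    {f M : κ → R} (hf : ∀ i ∈ s, 0 ≤ f i) (hfM : ∀ i ∈ s, f i ≤ M i) :
    ∏ i ∈ s, f i ≤ (∏ i ∈ t, f i) * ∏ i ∈ s \ t, M i := by
  rw [← Finset.prod_sdiff hts, mul_comm]
  exact mul_le_mul_of_nonneg_left
    (Finset.prod_le_prod (fun i hi => hf i (Finset.sdiff_subset hi))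
      fun i hi => hfM i (Finset.sdiff_subset hi))
    (Finset.prod_nonneg fun i hi => hf i (hts hi))

theorem norm_mul_sum_filter_prod_le {α κ : Type*} {c : ℝ} (hc : 0 ≤ c) (s : Finset α)
    (P : α → Prop) [DecidablePred P] (R : Finset κ) (g : α → κ → ℝ) :
    ‖c * ∑ j ∈ s.filter P, ∏ r ∈ R, g j r‖ ≤ c * ∑ j ∈ s, ∏ r ∈ R, |g j r| := by
  rw [Real.norm_eq_abs, abs_mul, abs_of_nonneg hc]
  refine mul_le_mul_of_nonneg_left ?_ hc
  calc |∑ j ∈ s.filter P, ∏ r ∈ R, g j r| ≤ ∑ j ∈ s.filter P, ∏ r ∈ R, |g j r| :=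
        (Finset.abs_sum_le_sum_abs _ _).trans_eq
          (Finset.sum_congr rfl fun j _ => Finset.abs_prod _ _)
    _ ≤ ∑ j ∈ s, ∏ r ∈ R, |g j r| :=
        Finset.sum_le_sum_of_subset_of_nonneg (Finset.filter_subset _ _)
          fun j _ _ => Finset.prod_nonneg fun r _ => abs_nonneg _

theorem one_div_pow_mul_le_div {C x : ℝ} (hC : 0 ≤ C) (hx : 1 ≤ x) {c n : ℕ} (hcn : c < n) :
    1 / x ^ n * (C * x ^ c) ≤ C / x := by
  have hx0 : 0 < x := zero_lt_one.trans_le hx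
  rw [one_div_mul_eq_div, div_le_div_iff₀ (by positivity) hx0, mul_assoc, ← pow_succ]
  exact mul_le_mul_of_nonneg_left (pow_le_pow_right₀ hx hcn) hC

theorem SimpleGraph.Reachable.exists_adj_dist_lt {V : Type*} {G : SimpleGraph V} {x y : V}
    (h : G.Reachable x y) (hne : x ≠ y) : ∃ w, G.Adj x w ∧ G.dist w y < G.dist x y := by
  obtain ⟨p, hp⟩ := h.exists_walk_length_eq_dist
  cases p with
  | nil => exact absurd rfl hne
  | cons hadj q =>
    refine ⟨_, hadj, ?_⟩
    have := G.dist_le q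
    rw [SimpleGraph.Walk.length_cons] at hp
    omega

structure RootedForest {V ι : Type*} (u v : ι → V) where
  nonroots : Finset V
  parent : V → V
  edge : V → ι
  depth : V → ℕ
  edge_ends : ∀ ℓ ∈ nonroots,
    (u (edge ℓ) = ℓ ∧ v (edge ℓ) = parent ℓ) ∨ (u (edge ℓ) = parent ℓ ∧ v (edge ℓ) = ℓ)
  depth_parent_lt : ∀ ℓ ∈ nonroots, depth (parent ℓ) < depth ℓ

namespace RootedForest

variable {V ι : Type*} {u v : ι → V} (F : RootedForest u v)

theorem ends_ne {ℓ : V} (hℓ : ℓ ∈ F.nonroots) : u (F.edge ℓ) ≠ v (F.edge ℓ) := by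
  have hlt := F.depth_parent_lt ℓ hℓ
  rcases F.edge_ends ℓ hℓ with ⟨hu, hv⟩ | ⟨hu, hv⟩ <;> rw [hu, hv] <;> rintro h
  · rw [← h] at hlt; exact lt_irrefl _ hlt
  · rw [h] at hlt; exact lt_irrefl _ hlt

theorem injOn_edge : Set.InjOn F.edge F.nonroots := by
  intro ℓ₁ h₁ ℓ₂ h₂ he
  have d₁ := F.depth_parent_lt ℓ₁ h₁
  have d₂ := F.depth_parent_lt ℓ₂ h₂
  rcases F.edge_ends ℓ₁ h₁ with ⟨u₁, v₁⟩ | ⟨u₁, v₁⟩ <;>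
    rcases F.edge_ends ℓ₂ h₂ with ⟨u₂, v₂⟩ | ⟨u₂, v₂⟩ <;> rw [he] at u₁ v₁
  · exact u₁.symm.trans u₂
  · rw [u₁] at u₂; rw [v₁] at v₂; rw [v₂] at d₁; rw [← u₂] at d₂; omega
  · rw [u₁] at u₂; rw [v₁] at v₂; rw [u₂] at d₁; rw [← v₂] at d₂; omega
  · exact v₁.symm.trans v₂

variable [DecidableEq V]

def coords (j : V → ℕ) (ℓ : V) : ℤ :=
  if ℓ ∈ F.nonroots then (j (v (F.edge ℓ)) : ℤ) - j (u (F.edge ℓ)) else j ℓ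

theorem coords_injective : Function.Injective F.coords := by
  intro j₁ j₂ h
  funext ℓ
  induction ℓ using (measure F.depth).wf.induction with
  | h ℓ ih =>
    have hℓ := congrFun h ℓ
    by_cases hS : ℓ ∈ F.nonroots
    · have hpar := ih (F.parent ℓ) (F.depth_parent_lt ℓ hS)
      simp only [coords, if_pos hS] at hℓ
      rcases F.edge_ends ℓ hS with ⟨hu, hv⟩ | ⟨hu, hv⟩ <;> rw [hu, hv] at hℓ <;> omega
    · simpa [coords, hS] using hℓ

variable [Fintype V]

theorem coords_mem_piFinset {N : ℕ} {j : V → ℕ}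
    (hj : j ∈ Fintype.piFinset fun _ => Finset.range N) :
    F.coords j ∈ Fintype.piFinset fun ℓ =>
      if ℓ ∈ F.nonroots then Finset.Ioo (-(N : ℤ)) N else Finset.Ico 0 (N : ℤ) := by
  simp only [Fintype.mem_piFinset, Finset.mem_range] at hj ⊢
  intro ℓ
  by_cases hS : ℓ ∈ F.nonroots
  · have := hj (u (F.edge ℓ))
    have := hj (v (F.edge ℓ))
    simp only [coords, if_pos hS, Finset.mem_Ioo]
    omega
  · have := hj ℓ
    simp only [coords, if_neg hS, Finset.mem_Ico]
    omega

theorem sum_prod_abs_le (K : ι → ℤ → ℝ)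
    (hK : ∀ ℓ ∈ F.nonroots, Summable fun z => |K (F.edge ℓ) z|) (N : ℕ) :
    ∑ j ∈ Fintype.piFinset (fun _ : V => Finset.range N),
        ∏ ℓ ∈ F.nonroots, |K (F.edge ℓ) ((j (v (F.edge ℓ)) : ℤ) - j (u (F.edge ℓ)))|
      ≤ (∏ ℓ ∈ F.nonroots, ∑' z, |K (F.edge ℓ) z|) * (N : ℝ) ^ F.nonrootsᶜ.card := by
  set f : V → ℤ → ℝ := fun ℓ z => if ℓ ∈ F.nonroots then |K (F.edge ℓ) z| else 1
  have hf : ∀ ℓ z, 0 ≤ f ℓ z := fun ℓ z => by positivity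
  calc _ = ∑ j ∈ Fintype.piFinset (fun _ : V => Finset.range N), ∏ ℓ, f ℓ (F.coords j ℓ) := by
        refine Finset.sum_congr rfl fun j _ => ?_
        simp only [f]
        rw [Finset.prod_ite_mem, Finset.univ_inter]
        exact Finset.prod_congr rfl fun ℓ hℓ => by rw [coords, if_pos hℓ]
    _ = ∑ g ∈ (Fintype.piFinset fun _ : V => Finset.range N).image F.coords,
          ∏ ℓ, f ℓ (g ℓ) :=
          (Finset.sum_image (f := fun g => ∏ ℓ, f ℓ (g ℓ))
            fun _ _ _ _ h => F.coords_injective h).symm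
    _ ≤ ∑ g ∈ Fintype.piFinset (fun ℓ =>
          if ℓ ∈ F.nonroots then Finset.Ioo (-(N : ℤ)) N else Finset.Ico 0 (N : ℤ)),
          ∏ ℓ, f ℓ (g ℓ) :=
        Finset.sum_le_sum_of_subset_of_nonneg
          (Finset.image_subset_iff.mpr fun j hj => F.coords_mem_piFinset hj)
          fun g _ _ => Finset.prod_nonneg fun ℓ _ => hf ℓ (g ℓ)
    _ = ∏ ℓ, ∑ z ∈ (if ℓ ∈ F.nonroots then Finset.Ioo (-(N : ℤ)) N else Finset.Ico 0 (N : ℤ)),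
          f ℓ z := (Finset.prod_univ_sum _ _).symm
    _ ≤ ∏ ℓ, if ℓ ∈ F.nonroots then ∑' z, |K (F.edge ℓ) z| else (N : ℝ) := by
        refine Finset.prod_le_prod (fun ℓ _ => Finset.sum_nonneg fun z _ => hf ℓ z) fun ℓ _ => ?_
        by_cases hS : ℓ ∈ F.nonroots
        · simp only [f, if_pos hS]
          exact (hK ℓ hS).sum_le_tsum _ fun z _ => abs_nonneg _
        · simp [f, hS]
    _ = _ := by
        rw [← Finset.prod_mul_prod_compl F.nonroots,
          Finset.prod_congr rfl fun ℓ hℓ => if_pos hℓ,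
          Finset.prod_congr rfl fun ℓ hℓ => if_neg (Finset.mem_compl.mp hℓ), Finset.prod_const]

theorem sum_prod_abs_kernel_le [Fintype ι] [DecidableEq ι] (K : ι → ℤ → ℝ)
    (hK : ∀ r, u r ≠ v r → Summable fun z => |K r z|) (N : ℕ) :
    ∑ j ∈ Fintype.piFinset (fun _ : V => Finset.range N),
        ∏ r ∈ Finset.univ.filter (fun r => u r ≠ v r), |K r ((j (v r) : ℤ) - j (u r))|
      ≤ (∏ r ∈ Finset.univ.filter (fun r => u r ≠ v r), ∑' z, |K r z|) *
          (N : ℝ) ^ F.nonrootsᶜ.card := by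
  set R := Finset.univ.filter fun r => u r ≠ v r
  set M : ι → ℝ := fun r => ∑' z, |K r z|
  have hER : F.nonroots.image F.edge ⊆ R := fun r hr => by
    obtain ⟨ℓ, hℓ, rfl⟩ := Finset.mem_image.mp hr
    exact Finset.mem_filter.mpr ⟨Finset.mem_univ _, F.ends_ne hℓ⟩
  have hprod : ∀ j : V → ℕ, ∏ r ∈ R, |K r ((j (v r) : ℤ) - j (u r))| ≤
      (∏ ℓ ∈ F.nonroots, |K (F.edge ℓ) ((j (v (F.edge ℓ)) : ℤ) - j (u (F.edge ℓ)))|) *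
        ∏ r ∈ R \ F.nonroots.image F.edge, M r := fun j => by
    rw [← Finset.prod_image (f := fun r => |K r ((j (v r) : ℤ) - j (u r))|) F.injOn_edge]
    exact prod_le_prod_mul_prod_sdiff hER (fun r _ => abs_nonneg _) fun r hr =>
      (hK r (Finset.mem_filter.mp hr).2).le_tsum _ fun z _ => abs_nonneg _
  have hM : 0 ≤ ∏ r ∈ R \ F.nonroots.image F.edge, M r :=
    Finset.prod_nonneg fun r _ => tsum_nonneg fun z => abs_nonneg _
  calc _ ≤ _ := Finset.sum_le_sum fun j _ => hprod j
    _ = _ := (Finset.sum_mul _ _ _).symm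
    _ ≤ (∏ ℓ ∈ F.nonroots, M (F.edge ℓ)) * (N : ℝ) ^ F.nonrootsᶜ.card *
          ∏ r ∈ R \ F.nonroots.image F.edge, M r :=
        mul_le_mul_of_nonneg_right (F.sum_prod_abs_le K
          (fun ℓ hℓ => hK _ (F.ends_ne hℓ)) N) hM
    _ = _ := by
        rw [← Finset.prod_image (f := M) F.injOn_edge, mul_right_comm, mul_comm (∏ r ∈ _, M r),
          Finset.prod_sdiff hER]

end RootedForest

section PairGraph

variable {V ι : Type*}

def pairGraph (u v : ι → V) : SimpleGraph V :=
  SimpleGraph.fromRel fun x y => ∃ r, u r = x ∧ v r = y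

theorem pairGraph_connectedComponentMk_eq (u v : ι → V) (r : ι) :
    (pairGraph u v).connectedComponentMk (u r) = (pairGraph u v).connectedComponentMk (v r) := by
  by_cases h : u r = v r
  · rw [h]
  · exact SimpleGraph.ConnectedComponent.connectedComponentMk_eq_of_adj ⟨h, Or.inl ⟨r, rfl, rfl⟩⟩

theorem exists_rootedForest [Fintype V] [DecidableEq V] [Nonempty ι] (u v : ι → V) :
    ∃ F : RootedForest u v,
      F.nonrootsᶜ.card ≤ Fintype.card (pairGraph u v).ConnectedComponent := by
  set G := pairGraph u v
  let root : V → V := fun ℓ => (G.connectedComponentMk ℓ).out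
  have hroot : ∀ ℓ, G.connectedComponentMk (root ℓ) = G.connectedComponentMk ℓ :=
    fun ℓ => Quot.out_eq _
  have hstep : ∀ ℓ, ℓ ≠ root ℓ → ∃ w r, ((u r = ℓ ∧ v r = w) ∨ (u r = w ∧ v r = ℓ)) ∧
      G.dist w (root w) < G.dist ℓ (root ℓ) := by
    intro ℓ hℓ
    obtain ⟨w, hadj, hlt⟩ :=
      (SimpleGraph.ConnectedComponent.exact (hroot ℓ).symm).exists_adj_dist_lt hℓ
    have hw : root w = root ℓ := congrArg Quot.out
      (SimpleGraph.ConnectedComponent.connectedComponentMk_eq_of_adj hadj).symm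
    obtain ⟨-, ⟨r, hu, hv⟩ | ⟨r, hu, hv⟩⟩ := hadj
    · exact ⟨w, r, Or.inl ⟨hu, hv⟩, hw ▸ hlt⟩
    · exact ⟨w, r, Or.inr ⟨hu, hv⟩, hw ▸ hlt⟩
  choose! parent edge hedge hdepth using hstep
  refine ⟨⟨Finset.univ.filter fun ℓ => ℓ ≠ root ℓ, parent, edge, fun ℓ => G.dist ℓ (root ℓ),
    fun ℓ hℓ => hedge ℓ (Finset.mem_filter.mp hℓ).2,
    fun ℓ hℓ => hdepth ℓ (Finset.mem_filter.mp hℓ).2⟩, ?_⟩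
  refine (Finset.card_le_card_of_injOn G.connectedComponentMk
    (fun _ _ => Finset.mem_univ _) ?_).trans_eq Finset.card_univ
  intro ℓ₁ h₁ ℓ₂ h₂ h
  simp only [Finset.mem_coe, Finset.mem_compl, Finset.mem_filter, Finset.mem_univ, true_and,
    not_not] at h₁ h₂
  rw [h₁, h₂]
  exact congrArg Quot.out h

theorem card_connectedComponent_pairGraph_lt {X : Type*} [Fintype X] [Fintype ι] [Fintype V]
    [DecidableEq V] (β : X → V) (hβ : Function.Surjective β) (a b : ι → X)
    (hbij : Function.Bijective (Sum.elim a b))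
    (hblock : ∃ ℓ, 3 ≤ (Finset.univ.filter fun x => β x = ℓ).card) :
    Fintype.card (pairGraph (β ∘ a) (β ∘ b)).ConnectedComponent < Fintype.card ι := by
  set G := pairGraph (β ∘ a) (β ∘ b)
  have hpair : ∀ x, ∃ r, x = a r ∨ x = b r := fun x => by
    obtain ⟨r | r, hr⟩ := hbij.surjective x
    exacts [⟨r, Or.inl hr.symm⟩, ⟨r, Or.inr hr.symm⟩]
  choose pair hpair using hpair
  set f : ι → G.ConnectedComponent := fun r => G.connectedComponentMk (β (a r))
  have hf : ∀ x, f (pair x) = G.connectedComponentMk (β x) := fun x => by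
    rcases hpair x with h | h
    · simp only [f]; rw [← h]
    · exact (pairGraph_connectedComponentMk_eq (β ∘ a) (β ∘ b) (pair x)).trans (by
        simp only [Function.comp_apply]; rw [← h])
  have hsurj : Function.Surjective f := fun c => by
    induction c using SimpleGraph.ConnectedComponent.ind with
    | h ℓ =>
      obtain ⟨x, rfl⟩ := hβ ℓ
      exact ⟨pair x, hf x⟩
  refine Fintype.card_lt_of_surjective_not_injective f hsurj fun hinj => ?_
  obtain ⟨ℓ, hℓ⟩ := hblock
  obtain ⟨x₀, hx₀⟩ := Finset.card_pos.mp (by omega : 0 < (Finset.univ.filter fun x => β x = ℓ).card)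
  have hsub : (Finset.univ.filter fun x => β x = ℓ) ⊆ {a (pair x₀), b (pair x₀)} := by
    intro x hx
    have hx' : pair x = pair x₀ := hinj (by
      rw [hf, hf, (Finset.mem_filter.mp hx).2, (Finset.mem_filter.mp hx₀).2])
    rcases hpair x with h | h <;> rw [h, hx'] <;> simp
  have := (Finset.card_le_card hsub).trans Finset.card_le_two
  omega

end PairGraph

theorem stmt9_general (n p : ℕ) (hn : 1 ≤ n)
    (β : Fin (2 * n) → Fin p) (hβ : Function.Surjective β)
    (a b : Fin n → Fin (2 * n))
    (hbij : Function.Bijective (Sum.elim a b))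
    (K : Fin n → ℤ → ℝ)
    (hK : ∀ r, β (a r) ≠ β (b r) → Summable fun z : ℤ => |K r z|)
    (hblock : ∃ ℓ : Fin p, 3 ≤ (Finset.univ.filter fun x => β x = ℓ).card) :
    Tendsto (fun N : ℕ =>
      (1 / (N : ℝ) ^ n) *
        ∑ j ∈ (Fintype.piFinset fun _ : Fin p => Finset.range N).filter
            (fun j => StrictMono j),
          ∏ r ∈ Finset.univ.filter (fun r => β (a r) ≠ β (b r)),
            K r ((j (β (b r)) : ℤ) - (j (β (a r)) : ℤ)))
      atTop (nhds 0) := by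
  have : Nonempty (Fin n) := ⟨⟨0, hn⟩⟩
  obtain ⟨F, hF⟩ := exists_rootedForest (β ∘ a) (β ∘ b)
  have hroots : F.nonrootsᶜ.card < n := by
    simpa using hF.trans_lt (card_connectedComponent_pairGraph_lt β hβ a b hbij hblock)
  set C := ∏ r ∈ Finset.univ.filter (fun r => β (a r) ≠ β (b r)), ∑' z, |K r z|
  have hC : 0 ≤ C := Finset.prod_nonneg fun r _ => tsum_nonneg fun z => abs_nonneg _
  refine squeeze_zero_norm' ?_ (tendsto_const_div_atTop_nhds_zero_nat C)
  filter_upwards [eventually_ge_atTop 1] with N hN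
  have hN' : (1 : ℝ) ≤ N := by exact_mod_cast hN
  refine (norm_mul_sum_filter_prod_le (by positivity) _ _ _ _).trans ?_
  refine (mul_le_mul_of_nonneg_left (F.sum_prod_abs_kernel_le K hK N) (by positivity)).trans ?_
  exact one_div_pow_mul_le_div hC hN' hroots

/-- higher-order diagonals vanish, key step of Proposition 4.17.
Given a surjective block map `β : {1..2n} → {1..p}`, a perfect matching
`P = {{a_r, b_r}}` of `{1..2n}` (encoded by the bijectivity of `Sum.elim a b`), and
`ℓ¹` kernels `K_r` for the inter-block pairs, if some block has size at least 3 then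
`Λ_N = N^{−n} Σ_{0 ≤ j₁ < ⋯ < j_p ≤ N−1} ∏_{r : β(a_r) ≠ β(b_r)} K_r(j_{β(b_r)} − j_{β(a_r)})`
tends to `0` as `N → ∞`. -/
theorem stmt9 (n p : ℕ) (hn : 1 ≤ n) (hp : 1 ≤ p)
    (β : Fin (2 * n) → Fin p) (hβ : Function.Surjective β)
    (a b : Fin n → Fin (2 * n)) (hab : ∀ r, a r < b r)
    (hbij : Function.Bijective (Sum.elim a b))
    (K : Fin n → ℤ → ℝ)
    (hK : ∀ r, β (a r) ≠ β (b r) → Summable fun z : ℤ => |K r z|)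
    (hblock : ∃ ℓ : Fin p, 3 ≤ (Finset.univ.filter fun x => β x = ℓ).card) :
    Tendsto (fun N : ℕ =>
      (1 / (N : ℝ) ^ n) *
        ∑ j ∈ (Fintype.piFinset fun _ : Fin p => Finset.range N).filter
            (fun j => StrictMono j),
          ∏ r ∈ Finset.univ.filter (fun r => β (a r) ≠ β (b r)),
            K r ((j (β (b r)) : ℤ) - (j (β (a r)) : ℤ)))
      atTop (nhds 0) :=
  stmt9_general n p hn β hβ a b hbij K hK hblock
end

section
/- Let n ≥ 1 and p ≥ 1 be integers, let β : {1, …, 2n} → {1, …, p} be a surjection, and let P be a perfect matching of {1, …, 2n}. Define the simple graph G on the vertex set {1, …, p} in which distinct vertices ℓ and ℓ' are adjacent if and only if there is a pair {a, b} ∈ P with {β(a), β(b)} = {ℓ, ℓ'}. Suppose some block β^{−1}(ℓ₀) has cardinality at least 3. Then the number of connected components of G that contain at least one edge (equivalently, the number of connected components of the subgraph of G induced on its non-isolated vertices) is at most n − 1. -/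
/-- block-graph combinatorics from the proof of Proposition 4.17.
Let `β : {1..2n} → {1..p}` be a surjective block map, `P` a perfect matching of `{1..2n}`
(encoded by `Sum.elim a b` bijective), and `G` the simple graph on blocks where `ℓ ~ ℓ'`
iff some matched pair has its endpoints in blocks `ℓ ≠ ℓ'`.  If some block has size `≥ 3`,
then the number of connected components of `G` containing at least one edge is `≤ n − 1`. -/
theorem stmt10 (n p : ℕ) (hn : 1 ≤ n) (hp : 1 ≤ p)
    (β : Fin (2 * n) → Fin p) (hβ : Function.Surjective β)
    (a b : Fin n → Fin (2 * n))
    (hbij : Function.Bijective (Sum.elim a b))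
    (G : SimpleGraph (Fin p))
    (hG : G = SimpleGraph.fromRel fun ℓ ℓ' => ∃ r : Fin n, β (a r) = ℓ ∧ β (b r) = ℓ')
    (hblock : ∃ ℓ₀ : Fin p, 3 ≤ (Finset.univ.filter fun x => β x = ℓ₀).card) :
    Nat.card {c : G.ConnectedComponent //
      ∃ v w : Fin p, G.Adj v w ∧ G.connectedComponentMk v = c} ≤ n - 1 := by
  classical
  obtain ⟨ℓ₀, hℓ₀⟩ := hblock
  -- adjacency characterization
  have hadj : ∀ v w : Fin p, G.Adj v w → ∃ r : Fin n, β (a r) ≠ β (b r) ∧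
      G.connectedComponentMk (β (a r)) = G.connectedComponentMk v := by
    intro v w h
    have h' := h
    rw [hG, SimpleGraph.fromRel_adj] at h'
    obtain ⟨hne, hrel⟩ := h'
    rcases hrel with ⟨r, h1, h2⟩ | ⟨r, h1, h2⟩
    · exact ⟨r, by rw [h1, h2]; exact hne, by rw [h1]⟩
    · refine ⟨r, by rw [h1, h2]; exact hne.symm, ?_⟩
      rw [h1]
      exact SimpleGraph.ConnectedComponent.sound h.symm.reachable
  -- mixed pairs give edges
  have hedge : ∀ r : Fin n, β (a r) ≠ β (b r) → G.Adj (β (a r)) (β (b r)) := by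
    intro r hr
    rw [hG, SimpleGraph.fromRel_adj]
    exact ⟨hr, Or.inl ⟨r, rfl, rfl⟩⟩
  -- index of the pair containing an element
  set e := Equiv.ofBijective _ hbij with he
  set idx : Fin (2 * n) → Fin n := fun x => Sum.elim id id (e.symm x) with hidx
  have hmem : ∀ x, x = a (idx x) ∨ x = b (idx x) := by
    intro x
    have h := e.apply_symm_apply x
    rcases hs : e.symm x with r | r
    · left
      rw [hs] at h
      simp only [hidx, hs, Sum.elim_inl, id]
      rw [← h]; rfl
    · right
      rw [hs] at h
      simp only [hidx, hs, Sum.elim_inr, id]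
      rw [← h]; rfl
  -- three distinct elements in block ℓ₀
  obtain ⟨x1, x2, x3, hx1, hx2, hx3, h12, h13, h23⟩ :=
    Finset.two_lt_card_iff.mp (by omega : 2 < (Finset.univ.filter fun x => β x = ℓ₀).card)
  simp only [Finset.mem_filter, Finset.mem_univ, true_and] at hx1 hx2 hx3
  -- two of them have distinct pair indices, both touching ℓ₀
  have htouch : ∀ x : Fin (2 * n), β x = ℓ₀ → β (a (idx x)) = ℓ₀ ∨ β (b (idx x)) = ℓ₀ := by
    intro x hx
    rcases hmem x with h | h
    · left; rw [← h, hx]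
    · right; rw [← h, hx]
  have hpigeon : ∃ r1 r2 : Fin n, r1 ≠ r2 ∧
      (β (a r1) = ℓ₀ ∨ β (b r1) = ℓ₀) ∧ (β (a r2) = ℓ₀ ∨ β (b r2) = ℓ₀) := by
    by_cases hA : idx x1 = idx x2
    · by_cases hB : idx x1 = idx x3
      · exfalso
        rcases hmem x1 with m1 | m1 <;> rcases hmem x2 with m2 | m2 <;>
          rcases hmem x3 with m3 | m3 <;>
          rw [← hA] at m2 <;> rw [← hB] at m3 <;>
          first
            | exact h12 (m1.trans m2.symm)
            | exact h13 (m1.trans m3.symm)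
            | exact h23 (m2.trans m3.symm)
      · exact ⟨idx x1, idx x3, hB, htouch x1 hx1, htouch x3 hx3⟩
    · exact ⟨idx x1, idx x2, hA, htouch x1 hx1, htouch x2 hx2⟩
  obtain ⟨r1, r2, hr12, ht1, ht2⟩ := hpigeon
  -- a mixed pair touching ℓ₀ lies in the component of ℓ₀
  have hcomp : ∀ r : Fin n, β (a r) ≠ β (b r) → (β (a r) = ℓ₀ ∨ β (b r) = ℓ₀) →
      G.connectedComponentMk (β (a r)) = G.connectedComponentMk ℓ₀ := by
    intro r hr ht
    rcases ht with h | h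
    · rw [h]
    · rw [← h]
      exact SimpleGraph.ConnectedComponent.sound (hedge r hr).reachable
  -- the key: there is rstar avoided by a system of representatives
  have key : ∃ rstar : Fin n, ∀ c : G.ConnectedComponent,
      (∃ v w : Fin p, G.Adj v w ∧ G.connectedComponentMk v = c) →
      ∃ r : Fin n, r ≠ rstar ∧ β (a r) ≠ β (b r) ∧
        G.connectedComponentMk (β (a r)) = c := by
    by_cases hall : ∀ r : Fin n, β (a r) ≠ β (b r)
    · -- every pair is mixed; r2's edge lives in the component of ℓ₀
      refine ⟨r2, ?_⟩
      intro c ⟨v, w, hvw, hc⟩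
      by_cases hcl : c = G.connectedComponentMk ℓ₀
      · exact ⟨r1, hr12, hall r1, by rw [hcl]; exact hcomp r1 (hall r1) ht1⟩
      · obtain ⟨r, hrm, hrc⟩ := hadj v w hvw
        rw [hc] at hrc
        refine ⟨r, ?_, hrm, hrc⟩
        rintro rfl
        exact hcl (hrc.symm.trans (hcomp r hrm ht2))
    · push_neg at hall
      obtain ⟨r0, hr0⟩ := hall
      refine ⟨r0, ?_⟩
      intro c ⟨v, w, hvw, hc⟩
      obtain ⟨r, hrm, hrc⟩ := hadj v w hvw
      refine ⟨r, ?_, hrm, by rw [hrc, hc]⟩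
      rintro rfl
      exact hrm hr0
  obtain ⟨rstar, hkey⟩ := key
  set f : {c : G.ConnectedComponent //
      ∃ v w : Fin p, G.Adj v w ∧ G.connectedComponentMk v = c} → {r : Fin n // r ≠ rstar} :=
    fun c => ⟨(hkey c.1 c.2).choose, (hkey c.1 c.2).choose_spec.1⟩ with hf
  have hfinj : Function.Injective f := by
    intro c c' h
    have h1 := (hkey c.1 c.2).choose_spec.2.2
    have h2 := (hkey c'.1 c'.2).choose_spec.2.2
    apply Subtype.ext
    rw [← h1, ← h2]
    have : (hkey c.1 c.2).choose = (hkey c'.1 c'.2).choose := congrArg Subtype.val h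
    rw [this]
  calc Nat.card {c : G.ConnectedComponent //
        ∃ v w : Fin p, G.Adj v w ∧ G.connectedComponentMk v = c}
      ≤ Nat.card {r : Fin n // r ≠ rstar} := Nat.card_le_card_of_injective f hfinj
    _ = n - 1 := by
        rw [Nat.card_eq_fintype_card]
        simp [Fintype.card_subtype_compl, Fintype.card_subtype_eq]
end

section
/- Let n ≥ 1, let g₁, …, g_n : ℤ → ℝ satisfy Σ_{u∈ℤ} |g_k(u)| < ∞ for every k, let P = {{a_k, b_k} : k = 1, …, n} with a_k < b_k be a perfect matching of {1, …, 2n}, and let s, t ∈ [0, 1] with s < t. For N ≥ 1 define I_N(P) := N^{−n} · Σ_{(i₁,…,i_{2n})} 𝔴(i₁,…,i_{2n}) · ∏_{k=1}^{n} g_k(i_{b_k} − i_{a_k}), where the sum ranges over all integer tuples with ⌊Ns⌋ ≤ i₁ ≤ i₂ ≤ ⋯ ≤ i_{2n} ≤ ⌊Nt⌋ − 1, and 𝔴(i₁,…,i_{2n}) := ∏_{v∈ℤ} 1/(m_v!) with m_v := #{ℓ : i_ℓ = v}. If P is not the ladder pairing P_* := {{2j−1, 2j} : j = 1, …, n}, then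 I_N(P) → 0 as N → ∞. -/
open Filter
open scoped Classical

lemma aux_recover {n : ℕ} (a b : Fin n → Fin (2*n))
    (hsurj : Function.Surjective (Sum.elim a b))
    {i i' : Fin (2*n) → ℤ} (ha : ∀ j, i (a j) = i' (a j))
    (hb : ∀ j, i (b j) = i' (b j)) : i = i' := by
  funext p
  obtain ⟨q, hq⟩ := hsurj p
  cases q with
  | inl j => rw [← hq]; simpa using ha j
  | inr j => rw [← hq]; simpa using hb j

lemma aux_k0 {n : ℕ} (a b : Fin n → Fin (2*n)) (hab : ∀ k, a k < b k)
    (hbij : Function.Bijective (Sum.elim a b))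
    (hnl : ¬ ∀ k : Fin n, (a k : ℕ) % 2 = 0 ∧ (b k : ℕ) = (a k : ℕ) + 1) :
    ∃ k₀, (a k₀ : ℕ) + 2 ≤ (b k₀ : ℕ) := by
  by_contra h
  push_neg at h
  have hba : ∀ k, (b k : ℕ) = (a k : ℕ) + 1 := by
    intro k
    have h1 : (a k : ℕ) < (b k : ℕ) := hab k
    have h2 := h k
    omega
  apply hnl
  have key : ∀ m : ℕ, ∀ k : Fin n, (a k : ℕ) = m → m % 2 = 0 := by
    intro m
    induction m using Nat.strong_induction_on with
    | _ m ih =>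
      intro k hk
      by_contra hodd
      have hm1 : 1 ≤ m := by omega
      have hp : m - 1 < 2 * n := by have := (a k).isLt; omega
      obtain ⟨q, hq⟩ := hbij.2 ⟨m - 1, hp⟩
      cases q with
      | inl j =>
        -- a j = m - 1, so b j = m = a k : contradiction with injectivity
        have haj : (a j : ℕ) = m - 1 := by
          have : a j = (⟨m - 1, hp⟩ : Fin (2*n)) := hq
          simpa using congrArg Fin.val this
        have hbj : (b j : ℕ) = m := by rw [hba j]; omega
        have : b j = a k := by
          apply Fin.ext; rw [hbj, hk]
        have : Sum.elim a b (Sum.inr j) = Sum.elim a b (Sum.inl k) := by simpa using this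
        exact absurd (hbij.1 this) (by simp)
      | inr j =>
        have hbj : (b j : ℕ) = m - 1 := by
          have : b j = (⟨m - 1, hp⟩ : Fin (2*n)) := hq
          simpa using congrArg Fin.val this
        have haj : (a j : ℕ) = m - 2 := by have := hba j; omega
        have hm2 : 2 ≤ m := by
          by_contra h2
          have : m = 1 := by omega
          have := hba j
          omega
        have := ih (m - 2) (by omega) j haj
        omega
  intro k
  exact ⟨key (a k) k rfl, hba k⟩

lemma aux_count {n : ℕ} (a b : Fin n → Fin (2*n))
    (hbij : Function.Bijective (Sum.elim a b))
    (k₀ j₀ : Fin n) (hjk : j₀ ≠ k₀) (c : Fin (2*n)) (hc : c = a j₀ ∨ c = b j₀)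
    (hac : a k₀ ≤ c) (hcb : c ≤ b k₀) (L R : ℤ) (u : Fin n → ℤ) :
    ((Fintype.piFinset fun _ : Fin (2*n) => Finset.Icc L R).filter
      fun i => Monotone i ∧ ∀ k, i (b k) - i (a k) = u k).card
      ≤ (Finset.Icc L R).card ^ (n-1) * min (Finset.Icc L R).card (u k₀ + 1).toNat := by
  set M := (Finset.Icc L R).card with hM
  set S := ((Fintype.piFinset fun _ : Fin (2*n) => Finset.Icc L R).filter
      fun i => Monotone i ∧ ∀ k, i (b k) - i (a k) = u k) with hS
  have hmem : ∀ i ∈ S, (∀ p, i p ∈ Finset.Icc L R) ∧ Monotone i ∧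
      ∀ k, i (b k) - i (a k) = u k := by
    intro i hi
    rw [hS, Finset.mem_filter, Fintype.mem_piFinset] at hi
    exact ⟨hi.1, hi.2⟩
  have hrec : ∀ i ∈ S, ∀ i' ∈ S, (∀ j, i (a j) = i' (a j)) → i = i' := by
    intro i hi i' hi' ha
    refine aux_recover a b hbij.2 ha (fun j => ?_)
    have h1 := (hmem i hi).2.2 j
    have h2 := (hmem i' hi').2.2 j
    have h3 := ha j
    omega
  have hn1 : 1 ≤ n := k₀.pos
  have bound1 : S.card ≤ M ^ n := by
    have hmaps : ∀ i ∈ S, (fun j => i (a j)) ∈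
        (Fintype.piFinset fun _ : Fin n => Finset.Icc L R) := by
      intro i hi
      rw [Fintype.mem_piFinset]
      exact fun j => (hmem i hi).1 (a j)
    have hinj : Set.InjOn (fun (i : Fin (2*n) → ℤ) (j : Fin n) => i (a j)) S := by
      intro i hi i' hi' h
      exact hrec i hi i' hi' (fun j => congrFun h j)
    calc S.card ≤ (Fintype.piFinset fun _ : Fin n => Finset.Icc L R).card :=
          Finset.card_le_card_of_injOn _ hmaps hinj
      _ = M ^ n := by simp [Fintype.card_piFinset, hM]
  have bound2 : S.card ≤ (u k₀ + 1).toNat * M ^ (n-1) := by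
    have hmaps : ∀ i ∈ S, (fun j => if j = j₀ then i c - i (a k₀) else i (a j)) ∈
        (Fintype.piFinset fun j : Fin n =>
          if j = j₀ then Finset.Icc (0:ℤ) (u k₀) else Finset.Icc L R) := by
      intro i hi
      rw [Fintype.mem_piFinset]
      intro j
      by_cases hj : j = j₀
      · subst hj
        rw [if_pos rfl]
        have hmono := (hmem i hi).2.1
        have h1 := hmono hac
        have h2 := hmono hcb
        have h3 := (hmem i hi).2.2 k₀
        rw [Finset.mem_Icc]
        omega
      · simp only [if_neg hj]
        exact (hmem i hi).1 (a j)
    have hinj : Set.InjOn (fun (i : Fin (2*n) → ℤ) (j : Fin n) =>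
        if j = j₀ then i c - i (a k₀) else i (a j)) S := by
      intro i hi i' hi' h
      have hk : i (a k₀) = i' (a k₀) := by
        have h0 := congrFun h k₀
        simpa [Ne.symm hjk] using h0
      have hcc : i c = i' c := by
        have h0 : i c - i (a k₀) = i' c - i' (a k₀) := by
          simpa using congrFun h j₀
        omega
      refine hrec i hi i' hi' (fun j => ?_)
      by_cases hj : j = j₀
      · subst hj
        rcases hc with h1 | h1
        · rw [← h1]; exact hcc
        · have g1 := (hmem i hi).2.2 j
          have g2 := (hmem i' hi').2.2 j
          rw [← h1] at g1 g2
          omega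
      · have := congrFun h j
        simpa [if_neg hj] using this
    calc S.card ≤ (Fintype.piFinset fun j : Fin n =>
          if j = j₀ then Finset.Icc (0:ℤ) (u k₀) else Finset.Icc L R).card :=
          Finset.card_le_card_of_injOn _ hmaps hinj
      _ = (u k₀ + 1).toNat * M ^ (n-1) := by
          rw [Fintype.card_piFinset]
          rw [← Finset.mul_prod_erase Finset.univ _ (Finset.mem_univ j₀)]
          rw [Finset.prod_congr rfl (fun j hj => by
            rw [if_neg (Finset.ne_of_mem_erase hj)])]
          rw [Finset.prod_const, Finset.card_erase_of_mem (Finset.mem_univ j₀),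
            Finset.card_univ, Fintype.card_fin]
          simp [Int.card_Icc, hM]
  rcases le_total M ((u k₀ + 1).toNat) with h | h
  · rw [min_eq_left h]
    calc S.card ≤ M ^ n := bound1
      _ = M ^ (n-1) * M := by
          rw [← pow_succ]
          congr 1
          omega
  · rw [min_eq_right h]
    calc S.card ≤ (u k₀ + 1).toNat * M ^ (n-1) := bound2
      _ = M ^ (n-1) * (u k₀ + 1).toNat := mul_comm _ _


lemma aux_fiber_sum {α γ : Type*} [DecidableEq γ] (s : Finset α) (B : Finset γ)
    (d : α → γ) (H : γ → ℝ) (C : γ → ℝ)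
    (hB : ∀ x ∈ s, d x ∈ B) (hH : ∀ u, 0 ≤ H u)
    (hC : ∀ u ∈ B, ((s.filter fun x => d x = u).card : ℝ) ≤ C u) :
    ∑ x ∈ s, H (d x) ≤ ∑ u ∈ B, C u * H u := by
  rw [← Finset.sum_fiberwise_of_maps_to hB]
  refine Finset.sum_le_sum (fun u hu => ?_)
  have h1 : ∑ x ∈ s.filter (fun x => d x = u), H (d x)
      = ((s.filter fun x => d x = u).card : ℝ) * H u := by
    rw [Finset.sum_congr rfl (fun x hx => by rw [(Finset.mem_filter.mp hx).2]),
      Finset.sum_const, nsmul_eq_mul]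
  rw [h1]
  exact mul_le_mul_of_nonneg_right (hC u hu) (hH u)

lemma aux_summ {n : ℕ} (g : Fin n → ℤ → ℝ) (hg : ∀ k, Summable fun u : ℤ => |g k u|)
    (k₀ : Fin n) (m : ℕ) :
    Summable (fun v : ℤ => ((min m ((v + 1).toNat) : ℕ) : ℝ) * |g k₀ v|) := by
  refine Summable.of_nonneg_of_le (fun v => by positivity) (fun v => ?_)
    ((hg k₀).mul_left (m : ℝ))
  refine mul_le_mul_of_nonneg_right ?_ (abs_nonneg _)
  exact_mod_cast min_le_left _ _

lemma aux_core {n : ℕ} (g : Fin n → ℤ → ℝ) (hg : ∀ k, Summable fun u : ℤ => |g k u|)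
    (a b : Fin n → Fin (2*n)) (hbij : Function.Bijective (Sum.elim a b))
    (k₀ j₀ : Fin n) (hjk : j₀ ≠ k₀) (c : Fin (2*n)) (hc : c = a j₀ ∨ c = b j₀)
    (hac : a k₀ ≤ c) (hcb : c ≤ b k₀) (L R : ℤ) :
    ∑ i ∈ (Fintype.piFinset fun _ : Fin (2*n) => Finset.Icc L R).filter (fun i => Monotone i),
        ∏ k, |g k (i (b k) - i (a k))|
      ≤ ((Finset.Icc L R).card : ℝ) ^ (n-1) *
        ((∑' v : ℤ, ((min (Finset.Icc L R).card ((v + 1).toNat) : ℕ) : ℝ) * |g k₀ v|) *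
          ∏ k ∈ Finset.univ.erase k₀, ∑' v : ℤ, |g k v|) := by
  have hΦs := aux_summ g hg k₀ (Finset.Icc L R).card
  have stepA : ∑ i ∈ (Fintype.piFinset fun _ : Fin (2*n) => Finset.Icc L R).filter
        (fun i => Monotone i), ∏ k, |g k (i (b k) - i (a k))|
      ≤ ∑ u ∈ (Fintype.piFinset fun _ : Fin n => Finset.Icc (L - R) (R - L)),
          (((Finset.Icc L R).card ^ (n-1) *
            min (Finset.Icc L R).card ((u k₀ + 1).toNat) : ℕ) : ℝ) * ∏ k, |g k (u k)| := by
    refine aux_fiber_sum _ _ (fun (i : Fin (2*n) → ℤ) (k : Fin n) => i (b k) - i (a k)) (fun u : Fin n → ℤ => ∏ k, |g k (u k)|) _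
      ?_ (fun u => Finset.prod_nonneg fun k _ => abs_nonneg _) ?_
    · intro i hi
      rw [Finset.mem_filter, Fintype.mem_piFinset] at hi
      rw [Fintype.mem_piFinset]
      intro k
      have h1 := hi.1 (b k)
      have h2 := hi.1 (a k)
      simp only [Finset.mem_Icc] at h1 h2 ⊢
      omega
    · intro u _
      have hsub : ((((Fintype.piFinset fun _ : Fin (2*n) => Finset.Icc L R).filter
            (fun i => Monotone i)).filter
              fun i => (fun k : Fin n => i (b k) - i (a k)) = u)) ⊆
          ((Fintype.piFinset fun _ : Fin (2*n) => Finset.Icc L R).filter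
            fun i => Monotone i ∧ ∀ k, i (b k) - i (a k) = u k) := by
        intro i hi
        rw [Finset.filter_filter, Finset.mem_filter] at hi
        rw [Finset.mem_filter]
        exact ⟨hi.1, hi.2.1, fun k => congrFun hi.2.2 k⟩
      have h4 := (Finset.card_le_card hsub).trans
        (aux_count a b hbij k₀ j₀ hjk c hc hac hcb L R u)
      have h5 : (((((Fintype.piFinset fun _ : Fin (2*n) => Finset.Icc L R).filter
            (fun i => Monotone i)).filter
              fun i => (fun k : Fin n => i (b k) - i (a k)) = u)).card : ℝ)
          ≤ (((Finset.Icc L R).card ^ (n-1) *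
            min (Finset.Icc L R).card ((u k₀ + 1).toNat) : ℕ) : ℝ) := by
        exact_mod_cast h4
      exact h5
  have stepB : ∀ u : Fin n → ℤ,
      (((Finset.Icc L R).card ^ (n-1) *
          min (Finset.Icc L R).card ((u k₀ + 1).toNat) : ℕ) : ℝ) * ∏ k, |g k (u k)|
        = ((Finset.Icc L R).card : ℝ) ^ (n-1) *
            ∏ k, ((if k = k₀
              then ((min (Finset.Icc L R).card ((u k + 1).toNat) : ℕ) : ℝ) else 1)
              * |g k (u k)|) := by
    intro u
    rw [Finset.prod_mul_distrib]
    rw [Finset.prod_ite_eq' Finset.univ k₀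
      (fun k => ((min (Finset.Icc L R).card ((u k + 1).toNat) : ℕ) : ℝ))]
    simp only [Finset.mem_univ, if_true]
    push_cast
    ring
  calc ∑ i ∈ (Fintype.piFinset fun _ : Fin (2*n) => Finset.Icc L R).filter
        (fun i => Monotone i), ∏ k, |g k (i (b k) - i (a k))|
      ≤ ∑ u ∈ (Fintype.piFinset fun _ : Fin n => Finset.Icc (L - R) (R - L)),
          (((Finset.Icc L R).card ^ (n-1) *
            min (Finset.Icc L R).card ((u k₀ + 1).toNat) : ℕ) : ℝ) * ∏ k, |g k (u k)| := stepA
    _ = ((Finset.Icc L R).card : ℝ) ^ (n-1) *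
          ∑ u ∈ (Fintype.piFinset fun _ : Fin n => Finset.Icc (L - R) (R - L)),
            ∏ k, ((if k = k₀
              then ((min (Finset.Icc L R).card ((u k + 1).toNat) : ℕ) : ℝ) else 1)
              * |g k (u k)|) := by
        rw [Finset.mul_sum]
        exact Finset.sum_congr rfl (fun u _ => stepB u)
    _ = ((Finset.Icc L R).card : ℝ) ^ (n-1) *
          ∏ k, ∑ v ∈ Finset.Icc (L - R) (R - L),
            ((if k = k₀
              then ((min (Finset.Icc L R).card ((v + 1).toNat) : ℕ) : ℝ) else 1)
              * |g k v|) := by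
        rw [Finset.prod_univ_sum]
    _ ≤ ((Finset.Icc L R).card : ℝ) ^ (n-1) *
        ((∑' v : ℤ, ((min (Finset.Icc L R).card ((v + 1).toNat) : ℕ) : ℝ) * |g k₀ v|) *
          ∏ k ∈ Finset.univ.erase k₀, ∑' v : ℤ, |g k v|) := by
        refine mul_le_mul_of_nonneg_left ?_ (by positivity)
        rw [← Finset.mul_prod_erase Finset.univ
          (fun k => ∑ v ∈ Finset.Icc (L - R) (R - L),
            ((if k = k₀
              then ((min (Finset.Icc L R).card ((v + 1).toNat) : ℕ) : ℝ) else 1)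
              * |g k v|)) (Finset.mem_univ k₀)]
        have hterm : ∀ (k : Fin n) (v : ℤ), 0 ≤ (if k = k₀
              then ((min (Finset.Icc L R).card ((v + 1).toNat) : ℕ) : ℝ) else 1)
              * |g k v| := by
          intro k v
          exact mul_nonneg (by split_ifs <;> positivity) (abs_nonneg _)
        refine mul_le_mul ?_ ?_ ?_ ?_
        · simp only [eq_self_iff_true, if_true]
          exact Summable.sum_le_tsum _ (fun v _ => by positivity) hΦs
        · refine Finset.prod_le_prod
            (fun k _ => Finset.sum_nonneg fun v _ => hterm k v) ?_
          intro k hk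
          simp only [if_neg (Finset.ne_of_mem_erase hk), one_mul]
          exact Summable.sum_le_tsum _ (fun v _ => abs_nonneg _) (hg k)
        · exact Finset.prod_nonneg (fun k _ => Finset.sum_nonneg fun v _ => hterm k v)
        · exact tsum_nonneg (fun v => by positivity)

/-- Proposition `non_ladder_vanishes`.
For `ℓ¹` kernels `g_k`, a perfect matching `P = {{a_k, b_k}}` of `{1,…,2n}` (here in
`0`-based indexing on `Fin (2n)`, with `a k < b k` and `Sum.elim a b` bijective) which is
*not* the ladder pairing, the weighted simplex sums
`I_N(P) = N^{−n} Σ_{⌊Ns⌋ ≤ i₁ ≤ ⋯ ≤ i_{2n} ≤ ⌊Nt⌋−1} 𝔴(i) ∏_k g_k(i_{b_k} − i_{a_k})`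
tend to `0` as `N → ∞`, where `𝔴(i) = ∏_v 1/m_v!` and `m_v = #{ℓ : i_ℓ = v}`. -/
theorem stmt11 (n : ℕ) (hn : 1 ≤ n)
    (g : Fin n → ℤ → ℝ) (hg : ∀ k, Summable fun u : ℤ => |g k u|)
    (a b : Fin n → Fin (2 * n)) (hab : ∀ k, a k < b k)
    (hbij : Function.Bijective (Sum.elim a b))
    (hnl : ¬ ∀ k : Fin n, (a k : ℕ) % 2 = 0 ∧ (b k : ℕ) = (a k : ℕ) + 1)
    (s t : ℝ) (hs : 0 ≤ s) (ht : t ≤ 1) (hst : s < t)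
    (w : (Fin (2 * n) → ℤ) → ℝ)
    (hw : ∀ i, w i = ∏ v ∈ Finset.univ.image i,
      (1 / (((Finset.univ.filter fun ℓ => i ℓ = v).card.factorial : ℕ) : ℝ))) :
    Tendsto (fun N : ℕ =>
      (1 / (N : ℝ) ^ n) *
        ∑ i ∈ (Fintype.piFinset fun _ : Fin (2 * n) =>
            Finset.Icc ⌊(N : ℝ) * s⌋ (⌊(N : ℝ) * t⌋ - 1)).filter (fun i => Monotone i),
          w i * ∏ k : Fin n, g k (i (b k) - i (a k)))
      atTop (nhds 0) := by
  obtain ⟨k₀, hk₀⟩ := aux_k0 a b hab hbij hnl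
  have hc2n : (a k₀ : ℕ) + 1 < 2 * n := by have := (b k₀).isLt; omega
  set c : Fin (2 * n) := ⟨(a k₀ : ℕ) + 1, hc2n⟩ with hcdef
  have hcval : (c : ℕ) = (a k₀ : ℕ) + 1 := rfl
  obtain ⟨j₀, hc, hjk⟩ : ∃ j₀, (c = a j₀ ∨ c = b j₀) ∧ j₀ ≠ k₀ := by
    obtain ⟨q, hq⟩ := hbij.2 c
    cases q with
    | inl j =>
      refine ⟨j, Or.inl hq.symm, fun hj => ?_⟩
      have h1 : (a j : ℕ) = (a k₀ : ℕ) + 1 := by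
        rw [show a j = c from hq, hcval]
      rw [hj] at h1
      omega
    | inr j =>
      refine ⟨j, Or.inr hq.symm, fun hj => ?_⟩
      have h1 : (b j : ℕ) = (a k₀ : ℕ) + 1 := by
        rw [show b j = c from hq, hcval]
      rw [hj] at h1
      omega
  have hac : a k₀ ≤ c := by rw [Fin.le_def]; omega
  have hcb : c ≤ b k₀ := by rw [Fin.le_def]; omega
  have hΨsummable : ∀ N : ℕ,
      Summable (fun v : ℤ => |g k₀ v| * min 1 (((v + 1).toNat : ℝ) / N)) := by
    intro N
    refine Summable.of_nonneg_of_le (fun v => ?_) (fun v => ?_) (hg k₀)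
    · have h0 : (0:ℝ) ≤ ((v + 1).toNat : ℝ) / N := by positivity
      positivity
    · exact mul_le_of_le_one_right (abs_nonneg _) (min_le_left _ _)
  have hΨ0 : ∀ N : ℕ, (0:ℝ) ≤ ∑' v : ℤ, |g k₀ v| * min 1 (((v + 1).toNat : ℝ) / N) := by
    intro N
    refine tsum_nonneg (fun v => ?_)
    have h0 : (0:ℝ) ≤ ((v + 1).toNat : ℝ) / N := by positivity
    positivity
  have hD0 : (0:ℝ) ≤ ∏ k ∈ Finset.univ.erase k₀, ∑' v : ℤ, |g k v| :=
    Finset.prod_nonneg (fun k _ => tsum_nonneg (fun v => abs_nonneg _))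
  apply squeeze_zero_norm' (a := fun N : ℕ =>
    (∏ k ∈ Finset.univ.erase k₀, ∑' v : ℤ, |g k v|) *
      ∑' v : ℤ, |g k₀ v| * min 1 (((v + 1).toNat : ℝ) / N))
  · filter_upwards [eventually_ge_atTop 1] with N hN
    have hN0 : (0:ℝ) < (N:ℝ) := by exact_mod_cast hN
    have hNn0 : (0:ℝ) < (N:ℝ) ^ n := by positivity
    set L : ℤ := ⌊(N : ℝ) * s⌋ with hL
    set R : ℤ := ⌊(N : ℝ) * t⌋ - 1 with hR
    have hMN : (Finset.Icc L R).card ≤ N := by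
      have h1 : ⌊(N : ℝ) * t⌋ ≤ (N : ℤ) := by
        have h2 : (N : ℝ) * t ≤ ((N : ℤ) : ℝ) := by
          push_cast
          nlinarith [hN0.le]
        calc ⌊(N : ℝ) * t⌋ ≤ ⌊((N : ℤ) : ℝ)⌋ := Int.floor_le_floor h2
          _ = (N : ℤ) := Int.floor_intCast N
      have h2 : 0 ≤ L := by
        rw [hL]
        exact Int.floor_nonneg.mpr (by positivity)
      rw [Int.card_Icc, Int.toNat_le]
      omega
    have hMNr : (((Finset.Icc L R).card : ℕ) : ℝ) ≤ (N : ℝ) := by exact_mod_cast hMN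
    have hΦs := aux_summ g hg k₀ (Finset.Icc L R).card
    have hΦ0 : (0:ℝ) ≤ ∑' v : ℤ,
        ((min (Finset.Icc L R).card ((v + 1).toNat) : ℕ) : ℝ) * |g k₀ v| :=
      tsum_nonneg (fun v => by positivity)
    have hcore := aux_core g hg a b hbij k₀ j₀ hjk c hc hac hcb L R
    have hstep1 : ∀ i ∈ (Fintype.piFinset fun _ : Fin (2 * n) =>
          Finset.Icc L R).filter (fun i => Monotone i),
        |w i * ∏ k, g k (i (b k) - i (a k))| ≤ ∏ k, |g k (i (b k) - i (a k))| := by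
      intro i _
      have h1 : 0 ≤ w i ∧ w i ≤ 1 := by
        rw [hw i]
        constructor
        · exact Finset.prod_nonneg (fun v _ => by positivity)
        · refine Finset.prod_le_one (fun v _ => by positivity) (fun v _ => ?_)
          rw [div_le_one (by exact_mod_cast Nat.factorial_pos _)]
          exact_mod_cast Nat.one_le_iff_ne_zero.mpr (Nat.factorial_ne_zero _)
      rw [abs_mul, Finset.abs_prod, abs_of_nonneg h1.1]
      exact mul_le_of_le_one_left (Finset.prod_nonneg fun k _ => abs_nonneg _) h1.2
    have hΦle : (∑' v : ℤ,
          ((min (Finset.Icc L R).card ((v + 1).toNat) : ℕ) : ℝ) * |g k₀ v|)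
        ≤ (N : ℝ) * ∑' v : ℤ, |g k₀ v| * min 1 (((v + 1).toNat : ℝ) / N) := by
      have hpt : ∀ v : ℤ, ((min (Finset.Icc L R).card ((v + 1).toNat) : ℕ) : ℝ) * |g k₀ v|
          ≤ (N : ℝ) * (|g k₀ v| * min 1 (((v + 1).toNat : ℝ) / N)) := by
        intro v
        have hx0 : (0:ℝ) ≤ ((v + 1).toNat : ℝ) := by positivity
        have e1 : (N : ℝ) * min 1 (((v + 1).toNat : ℝ) / N)
            = min (N : ℝ) ((v + 1).toNat : ℝ) := by
          rw [mul_min_of_nonneg _ _ hN0.le, mul_one]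
          congr 1
          field_simp
        have h1 : ((min (Finset.Icc L R).card ((v + 1).toNat) : ℕ) : ℝ)
            ≤ (N : ℝ) * min 1 (((v + 1).toNat : ℝ) / N) := by
          rw [e1, Nat.cast_min]
          exact min_le_min hMNr le_rfl
        calc ((min (Finset.Icc L R).card ((v + 1).toNat) : ℕ) : ℝ) * |g k₀ v|
            ≤ ((N : ℝ) * min 1 (((v + 1).toNat : ℝ) / N)) * |g k₀ v| :=
              mul_le_mul_of_nonneg_right h1 (abs_nonneg _)
          _ = (N : ℝ) * (|g k₀ v| * min 1 (((v + 1).toNat : ℝ) / N)) := by ring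
      calc (∑' v : ℤ, ((min (Finset.Icc L R).card ((v + 1).toNat) : ℕ) : ℝ) * |g k₀ v|)
          ≤ ∑' v : ℤ, (N : ℝ) * (|g k₀ v| * min 1 (((v + 1).toNat : ℝ) / N)) :=
            Summable.tsum_le_tsum hpt hΦs ((hΨsummable N).mul_left _)
        _ = (N : ℝ) * ∑' v : ℤ, |g k₀ v| * min 1 (((v + 1).toNat : ℝ) / N) := tsum_mul_left
    calc ‖(1 / (N : ℝ) ^ n) * ∑ i ∈ (Fintype.piFinset fun _ : Fin (2 * n) =>
            Finset.Icc L R).filter (fun i => Monotone i),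
          w i * ∏ k, g k (i (b k) - i (a k))‖
        = (1 / (N : ℝ) ^ n) * |∑ i ∈ (Fintype.piFinset fun _ : Fin (2 * n) =>
            Finset.Icc L R).filter (fun i => Monotone i),
          w i * ∏ k, g k (i (b k) - i (a k))| := by
          rw [Real.norm_eq_abs, abs_mul, abs_of_nonneg (by positivity)]
      _ ≤ (1 / (N : ℝ) ^ n) * ∑ i ∈ (Fintype.piFinset fun _ : Fin (2 * n) =>
            Finset.Icc L R).filter (fun i => Monotone i),
          ∏ k, |g k (i (b k) - i (a k))| := by
          refine mul_le_mul_of_nonneg_left ?_ (by positivity)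
          exact (Finset.abs_sum_le_sum_abs _ _).trans (Finset.sum_le_sum hstep1)
      _ ≤ (1 / (N : ℝ) ^ n) * (((Finset.Icc L R).card : ℝ) ^ (n-1) *
          ((∑' v : ℤ, ((min (Finset.Icc L R).card ((v + 1).toNat) : ℕ) : ℝ) * |g k₀ v|) *
            ∏ k ∈ Finset.univ.erase k₀, ∑' v : ℤ, |g k v|)) :=
          mul_le_mul_of_nonneg_left hcore (by positivity)
      _ ≤ (1 / (N : ℝ) ^ n) * ((N : ℝ) ^ (n-1) *
          (((N : ℝ) * ∑' v : ℤ, |g k₀ v| * min 1 (((v + 1).toNat : ℝ) / N)) *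
            ∏ k ∈ Finset.univ.erase k₀, ∑' v : ℤ, |g k v|)) := by
          refine mul_le_mul_of_nonneg_left ?_ (by positivity)
          refine mul_le_mul (pow_le_pow_left₀ (by positivity) hMNr _)
            (mul_le_mul_of_nonneg_right hΦle hD0)
            (mul_nonneg hΦ0 hD0) (by positivity)
      _ = (∏ k ∈ Finset.univ.erase k₀, ∑' v : ℤ, |g k v|) *
            ∑' v : ℤ, |g k₀ v| * min 1 (((v + 1).toNat : ℝ) / N) := by
          have hNn : (N : ℝ) ^ (n - 1) * (N : ℝ) = (N : ℝ) ^ n := by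
            rw [← pow_succ]
            congr 1
            omega
          have hne : ((N : ℝ) ^ n) ≠ 0 := ne_of_gt hNn0
          calc (1 / (N : ℝ) ^ n) * ((N : ℝ) ^ (n-1) *
              (((N : ℝ) * ∑' v : ℤ, |g k₀ v| * min 1 (((v + 1).toNat : ℝ) / N)) *
                ∏ k ∈ Finset.univ.erase k₀, ∑' v : ℤ, |g k v|))
              = (((N : ℝ) ^ (n-1) * (N : ℝ)) * (1 / (N : ℝ) ^ n)) *
                ((∏ k ∈ Finset.univ.erase k₀, ∑' v : ℤ, |g k v|) *
                  ∑' v : ℤ, |g k₀ v| * min 1 (((v + 1).toNat : ℝ) / N)) := by ring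
            _ = _ := by
                rw [hNn, mul_one_div, div_self hne, one_mul]
  · have hΨ0' : Tendsto (fun N : ℕ =>
        ∑' v : ℤ, |g k₀ v| * min 1 (((v + 1).toNat : ℝ) / N)) atTop (nhds 0) := by
      have hpt : ∀ v : ℤ, Tendsto
          (fun N : ℕ => |g k₀ v| * min 1 (((v + 1).toNat : ℝ) / N)) atTop (nhds 0) := by
        intro v
        have h1 : Tendsto (fun N : ℕ => |g k₀ v| * (((v + 1).toNat : ℝ) / N))
            atTop (nhds 0) := by
          have h2 := tendsto_const_div_atTop_nhds_zero_nat (((v + 1).toNat : ℝ))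
          have h3 := h2.const_mul |g k₀ v|
          simpa using h3
        refine squeeze_zero (fun N => ?_) (fun N => ?_) h1
        · have h0 : (0:ℝ) ≤ ((v + 1).toNat : ℝ) / N := by positivity
          positivity
        · exact mul_le_mul_of_nonneg_left (min_le_right _ _) (abs_nonneg _)
      have hbd : ∀ᶠ N : ℕ in atTop, ∀ v : ℤ,
          ‖|g k₀ v| * min 1 (((v + 1).toNat : ℝ) / N)‖ ≤ |g k₀ v| := by
        refine Eventually.of_forall (fun N v => ?_)
        rw [Real.norm_eq_abs, abs_of_nonneg (by
          have h0 : (0:ℝ) ≤ ((v + 1).toNat : ℝ) / N := by positivity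
          positivity)]
        exact mul_le_of_le_one_right (abs_nonneg _) (min_le_left _ _)
      have h5 := tendsto_tsum_of_dominated_convergence (hg k₀) hpt hbd
      simpa using h5
    have h6 := hΨ0'.const_mul (∏ k ∈ Finset.univ.erase k₀, ∑' v : ℤ, |g k v|)
    simpa using h6
end

section
/- Let l ≥ 1 and k₁, …, k_l ≥ 1 be integers with k₁ + ⋯ + k_l = 2n even, let g₁, …, g_n : ℤ → ℝ satisfy Σ_{u∈ℤ} |g_j(u)| < ∞ for every j, and let 0 ≤ s₁ < t₁ < s₂ < t₂ < ⋯ < s_l < t_l ≤ 1 be real numbers. For N ≥ 1, let Δ be the set of integer tuples (i₁, …, i_{2n}) whose coordinates are grouped consecutively into l groups of sizes k₁, …, k_l, where the ℓ-th group of coordinates forms a strictly increasing tuple in {⌊Ns_ℓ⌋, …, ⌊Nt_ℓ⌋ − 1} (i.e. ⌊Ns_ℓ⌋ ≤ i_{K_{ℓ−1}+1} < i_{K_{ℓ−1}+2} < ⋯ < i_{K_ℓ} ≤ ⌊Nt_ℓ⌋ − 1, with K_ℓ := k₁ + ⋯ + k_ℓ and K₀ := 0). Let P = {{p_{2j−1},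 p_{2j}} : j = 1, …, n} be a perfect matching of {1, …, 2n} that has at least one cross-simplicial pair, i.e. a pair {a, b} with a ≤ K_ℓ and b ≥ K_ℓ + 1 for some ℓ ∈ {1, …, l−1}. Then I_N := N^{−n} · Σ_{(i₁,…,i_{2n}) ∈ Δ} ∏_{j=1}^{n} g_j(i_{p_{2j}} − i_{p_{2j−1}}) → 0 as N → ∞. -/
open Filter
open scoped Classical

lemma stmt14_aux_sum (n : ℕ) (a b : Fin n → Fin (2 * n))
    (hbij : Function.Bijective (Sum.elim a b))
    (g : Fin n → ℤ → ℝ) (A : Finset ℤ) (U : Fin n → Finset ℤ)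
    (Δ : Finset (Fin (2 * n) → ℤ))
    (hA : ∀ i ∈ Δ, ∀ p, i p ∈ A)
    (hU : ∀ i ∈ Δ, ∀ j, i (b j) - i (a j) ∈ U j) :
    ∑ i ∈ Δ, ∏ j, |g j (i (b j) - i (a j))| ≤
      (A.card : ℝ) ^ n * ∏ j, ∑ u ∈ U j, |g j u| := by
  classical
  set ψ : (Fin (2 * n) → ℤ) → (Fin n → ℤ) × (Fin n → ℤ) :=
    fun i => (fun j => i (a j), fun j => i (b j) - i (a j)) with hψ
  have hinj : Function.Injective ψ := by
    intro i1 i2 h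
    have h1 : ∀ j, i1 (a j) = i2 (a j) := fun j => congrFun (congrArg Prod.fst h) j
    have h2 : ∀ j, i1 (b j) - i1 (a j) = i2 (b j) - i2 (a j) :=
      fun j => congrFun (congrArg Prod.snd h) j
    funext p
    obtain ⟨x, hx⟩ := hbij.2 p
    subst hx
    cases x with
    | inl j => simpa using h1 j
    | inr j =>
        have := h2 j
        have h1j := h1 j
        simp only [Sum.elim_inr]
        omega
  have himg : ∑ i ∈ Δ, ∏ j, |g j (i (b j) - i (a j))| =
      ∑ p ∈ Δ.image ψ, ∏ j, |g j (p.2 j)| := by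
    rw [Finset.sum_image (fun x _ y _ h => hinj h)]
  have hsub : Δ.image ψ ⊆ (Fintype.piFinset fun _ : Fin n => A) ×ˢ Fintype.piFinset U := by
    intro pr hpr
    obtain ⟨i, hiΔ, rfl⟩ := Finset.mem_image.1 hpr
    refine Finset.mem_product.2 ⟨Fintype.mem_piFinset.2 fun j => hA i hiΔ (a j),
      Fintype.mem_piFinset.2 fun j => hU i hiΔ j⟩
  have hle : ∑ p ∈ Δ.image ψ, ∏ j, |g j (p.2 j)| ≤
      ∑ p ∈ (Fintype.piFinset fun _ : Fin n => A) ×ˢ Fintype.piFinset U, ∏ j, |g j (p.2 j)| :=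
    Finset.sum_le_sum_of_subset_of_nonneg hsub
      (fun p _ _ => Finset.prod_nonneg fun j _ => abs_nonneg _)
  have hprod : ∑ p ∈ (Fintype.piFinset fun _ : Fin n => A) ×ˢ Fintype.piFinset U,
      ∏ j, |g j (p.2 j)| = (A.card : ℝ) ^ n * ∏ j, ∑ u ∈ U j, |g j u| := by
    rw [Finset.sum_product]
    have hin : ∀ x : Fin n → ℤ, ∑ y ∈ Fintype.piFinset U, ∏ j, |g j ((x, y).2 j)| =
        ∏ j, ∑ u ∈ U j, |g j u| := fun x => by
      rw [Finset.prod_univ_sum]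
    rw [Finset.sum_congr rfl fun x _ => hin x, Finset.sum_const, Fintype.card_piFinset]
    simp [nsmul_eq_mul, Finset.prod_const]
  rw [himg]
  calc _ ≤ _ := hle
    _ = _ := hprod

set_option maxHeartbeats 1000000 in
/-- Lemma `cross_simplex_pairings`: cross-simplex pairings vanish. -/
theorem stmt14 (l n : ℕ) (hl : 1 ≤ l) (hn : 1 ≤ n)
    (k : Fin l → ℕ) (hk : ∀ ℓ, 1 ≤ k ℓ)
    (Kc : ℕ → ℕ)
    (hKc : ∀ j : ℕ, Kc j = ∑ ℓ ∈ Finset.univ.filter (fun x : Fin l => (x : ℕ) < j), k ℓ)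
    (hsum : Kc l = 2 * n)
    (g : Fin n → ℤ → ℝ) (hg : ∀ j, Summable fun u : ℤ => |g j u|)
    (s t : Fin l → ℝ) (hs0 : 0 ≤ s ⟨0, hl⟩)
    (hst : ∀ ℓ, s ℓ < t ℓ)
    (hts : ∀ ℓ : Fin l, ∀ h : (ℓ : ℕ) + 1 < l, t ℓ < s ⟨(ℓ : ℕ) + 1, h⟩)
    (htl : t ⟨l - 1, by omega⟩ ≤ 1)
    (a b : Fin n → Fin (2 * n)) (hbij : Function.Bijective (Sum.elim a b))
    (hcross : ∃ j : Fin n, ∃ ℓ : ℕ, 1 ≤ ℓ ∧ ℓ ≤ l - 1 ∧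
      min (a j : ℕ) (b j : ℕ) < Kc ℓ ∧ Kc ℓ ≤ max (a j : ℕ) (b j : ℕ)) :
    Tendsto (fun N : ℕ =>
      (1 / (N : ℝ) ^ n) *
        ∑ i ∈ (Fintype.piFinset fun _ : Fin (2 * n) =>
            Finset.Icc ⌊(N : ℝ) * s ⟨0, hl⟩⌋ (⌊(N : ℝ) * t ⟨l - 1, by omega⟩⌋ - 1)).filter
            (fun i => ∀ ℓ : Fin l, ∀ pos : Fin (2 * n),
              Kc ℓ ≤ (pos : ℕ) → (pos : ℕ) < Kc ((ℓ : ℕ) + 1) →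
                (⌊(N : ℝ) * s ℓ⌋ ≤ i pos ∧ i pos ≤ ⌊(N : ℝ) * t ℓ⌋ - 1 ∧
                  ∀ pos' : Fin (2 * n), (pos' : ℕ) = (pos : ℕ) + 1 →
                    (pos' : ℕ) < Kc ((ℓ : ℕ) + 1) → i pos < i pos')),
          ∏ j : Fin n, g j (i (b j) - i (a j)))
      atTop (nhds 0) := by
  classical
  obtain ⟨j₀, ℓ₀, hℓ1, hℓ2, hminlt, hmaxge⟩ := hcross
  have hℓ₀l : ℓ₀ < l := by omega
  have hℓ₀l' : ℓ₀ - 1 < l := by omega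
  have hll : l - 1 < l := by omega
  -- basic facts about Kc
  have hKc0 : Kc 0 = 0 := by
    rw [hKc]
    simp
  have hKmono : ∀ {p q : ℕ}, p ≤ q → Kc p ≤ Kc q := by
    intro p q hpq
    rw [hKc, hKc]
    apply Finset.sum_le_sum_of_subset
    intro x hx
    simp only [Finset.mem_filter, Finset.mem_univ, true_and] at *
    omega
  have hgroup : ∀ p : ℕ, p < 2 * n → ∃ G, G < l ∧ Kc G ≤ p ∧ p < Kc (G + 1) := by
    intro p hp
    set G := Nat.findGreatest (fun j => Kc j ≤ p) l with hG
    have hG0 : Kc G ≤ p :=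
      Nat.findGreatest_spec (P := fun j => Kc j ≤ p) (Nat.zero_le l)
        (by show Kc 0 ≤ p; rw [hKc0]; exact Nat.zero_le p)
    have hGle : G ≤ l := Nat.findGreatest_le l
    have hGlt : G < l := by
      rcases lt_or_eq_of_le hGle with h | h
      · exact h
      · exfalso; rw [h] at hG0; omega
    have hGmax : ¬ Kc (G + 1) ≤ p :=
      Nat.findGreatest_is_greatest (P := fun j => Kc j ≤ p)
        (by rw [← hG]; exact Nat.lt_succ_self G) (by omega)
    exact ⟨G, hGlt, hG0, by omega⟩
  -- monotonicity of s and t across groups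
  have hstmono : ∀ q : ℕ, ∀ hq : q < l, ∀ p : ℕ, ∀ hpq : p ≤ q,
      s ⟨p, by omega⟩ ≤ s ⟨q, hq⟩ ∧ t ⟨p, by omega⟩ ≤ t ⟨q, hq⟩ := by
    intro q
    induction q with
    | zero =>
        intro hq p hpq
        have hp0 : p = 0 := by omega
        subst hp0
        exact ⟨le_refl _, le_refl _⟩
    | succ q ih =>
        intro hq p hpq
        have hql : q < l := by omega
        have hcross' : t ⟨q, hql⟩ < s ⟨q + 1, hq⟩ := hts ⟨q, hql⟩ hq
        have hstq : s ⟨q, hql⟩ < t ⟨q, hql⟩ := hst _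
        have hstq1 : s ⟨q + 1, hq⟩ < t ⟨q + 1, hq⟩ := hst _
        rcases Nat.lt_or_ge p (q + 1) with hp | hp
        · have h1 := ih hql p (by omega)
          constructor
          · linarith [h1.1]
          · linarith [h1.2]
        · have hp1 : p = q + 1 := by omega
          subst hp1
          exact ⟨le_refl _, le_refl _⟩
  -- the quantities
  set T : Fin n → ℝ := fun j => ∑' u, |g j u| with hT
  set C : ℝ := ∏ j ∈ Finset.univ.erase j₀, T j with hCdef
  have hTnn : ∀ j, 0 ≤ T j := fun j => tsum_nonneg fun u => abs_nonneg _
  have hCnn : 0 ≤ C := Finset.prod_nonneg fun j _ => hTnn j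
  set mval : ℕ → ℤ :=
    fun N => ⌊(N : ℝ) * s ⟨ℓ₀, hℓ₀l⟩⌋ - ⌊(N : ℝ) * t ⟨ℓ₀ - 1, hℓ₀l'⟩⌋ + 1 with hmval
  set sSmall : ℕ → Finset ℤ := fun N => Finset.Icc (-(mval N - 1)) (mval N - 1) with hsSmall
  set part : ℕ → ℝ := fun N => ∑ u ∈ sSmall N, |g j₀ u| with hpartdef
  have hpartle : ∀ N, part N ≤ T j₀ := fun N =>
    Summable.sum_le_tsum _ (fun u _ => abs_nonneg _) (hg j₀)
  -- squeeze
  refine squeeze_zero_norm' (a := fun N => (T j₀ - part N) * C) ?_ ?_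
  · -- the bound
    filter_upwards [eventually_ge_atTop 1] with N hN
    have hNR : (1 : ℝ) ≤ (N : ℝ) := by exact_mod_cast hN
    set lo : ℤ := ⌊(N : ℝ) * s ⟨0, hl⟩⌋ with hlo
    set hi : ℤ := ⌊(N : ℝ) * t ⟨l - 1, hll⟩⌋ - 1 with hhi
    set A : Finset ℤ := Finset.Icc lo hi with hA
    set Ufull : Finset ℤ := Finset.Icc (lo - hi) (hi - lo) with hUfull
    set U : Fin n → Finset ℤ := fun j => if j = j₀ then Ufull \ sSmall N else Ufull with hU
    set Δ : Finset (Fin (2 * n) → ℤ) :=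
      (Fintype.piFinset fun _ : Fin (2 * n) => Finset.Icc lo hi).filter
        (fun i => ∀ ℓ : Fin l, ∀ pos : Fin (2 * n),
          Kc ℓ ≤ (pos : ℕ) → (pos : ℕ) < Kc ((ℓ : ℕ) + 1) →
            (⌊(N : ℝ) * s ℓ⌋ ≤ i pos ∧ i pos ≤ ⌊(N : ℝ) * t ℓ⌋ - 1 ∧
              ∀ pos' : Fin (2 * n), (pos' : ℕ) = (pos : ℕ) + 1 →
                (pos' : ℕ) < Kc ((ℓ : ℕ) + 1) → i pos < i pos')) with hΔ
    -- membership facts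
    have hmemA : ∀ i ∈ Δ, ∀ p : Fin (2 * n), i p ∈ A := by
      intro i hi p
      have := (Finset.mem_filter.1 hi).1
      exact Fintype.mem_piFinset.1 this p
    -- the cross pair has a large difference
    have hcrossbig : ∀ i ∈ Δ, mval N ≤ |i (b j₀) - i (a j₀)| := by
      intro i hiΔ
      have hcond := (Finset.mem_filter.1 hiΔ).2
      obtain ⟨G1, hG1l, hG1a, hG1b⟩ :=
        hgroup (min (a j₀ : ℕ) (b j₀ : ℕ)) (by have := (a j₀).isLt; omega)
      obtain ⟨G2, hG2l, hG2a, hG2b⟩ :=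
        hgroup (max (a j₀ : ℕ) (b j₀ : ℕ)) (by have := (a j₀).isLt; have := (b j₀).isLt; omega)
      have hG1lt : G1 + 1 ≤ ℓ₀ := by
        by_contra hcon
        have : Kc ℓ₀ ≤ Kc G1 := hKmono (by omega)
        omega
      have hG2ge : ℓ₀ ≤ G2 := by
        by_contra hcon
        have : Kc (G2 + 1) ≤ Kc ℓ₀ := hKmono (by omega)
        omega
      -- floor monotonicity
      have hNnn : (0 : ℝ) ≤ (N : ℝ) := Nat.cast_nonneg N
      have hsfloor : ⌊(N : ℝ) * s ⟨ℓ₀, hℓ₀l⟩⌋ ≤ ⌊(N : ℝ) * s ⟨G2, hG2l⟩⌋ := by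
        apply Int.floor_le_floor
        exact mul_le_mul_of_nonneg_left ((hstmono G2 hG2l ℓ₀ hG2ge).1) hNnn
      have htfloor : ⌊(N : ℝ) * t ⟨G1, hG1l⟩⌋ ≤ ⌊(N : ℝ) * t ⟨ℓ₀ - 1, hℓ₀l'⟩⌋ := by
        apply Int.floor_le_floor
        exact mul_le_mul_of_nonneg_left ((hstmono (ℓ₀ - 1) hℓ₀l' G1 (by omega)).2) hNnn
      rcases le_total ((a j₀ : ℕ)) ((b j₀ : ℕ)) with hab | hab
      · rw [min_eq_left hab] at hG1a hG1b
        rw [max_eq_right hab] at hG2a hG2b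
        have hb1 := hcond ⟨G2, hG2l⟩ (b j₀) hG2a hG2b
        have ha1 := hcond ⟨G1, hG1l⟩ (a j₀) hG1a hG1b
        have h1 : ⌊(N : ℝ) * s ⟨G2, hG2l⟩⌋ ≤ i (b j₀) := hb1.1
        have h2 : i (a j₀) ≤ ⌊(N : ℝ) * t ⟨G1, hG1l⟩⌋ - 1 := ha1.2.1
        have : mval N ≤ i (b j₀) - i (a j₀) := by
          simp only [hmval]; omega
        exact le_trans this (le_abs_self _)
      · rw [min_eq_right hab] at hG1a hG1b
        rw [max_eq_left hab] at hG2a hG2b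
        have hb1 := hcond ⟨G1, hG1l⟩ (b j₀) hG1a hG1b
        have ha1 := hcond ⟨G2, hG2l⟩ (a j₀) hG2a hG2b
        have h1 : ⌊(N : ℝ) * s ⟨G2, hG2l⟩⌋ ≤ i (a j₀) := ha1.1
        have h2 : i (b j₀) ≤ ⌊(N : ℝ) * t ⟨G1, hG1l⟩⌋ - 1 := hb1.2.1
        have hneg : mval N ≤ -(i (b j₀) - i (a j₀)) := by
          simp only [hmval]; omega
        exact le_trans hneg (neg_le_abs _)
    have hmemU : ∀ i ∈ Δ, ∀ j, i (b j) - i (a j) ∈ U j := by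
      intro i hiΔ j
      have hubA : ∀ p : Fin (2 * n), lo ≤ i p ∧ i p ≤ hi := by
        intro p
        have := hmemA i hiΔ p
        rw [hA, Finset.mem_Icc] at this
        exact this
      have hfull : i (b j) - i (a j) ∈ Ufull := by
        rw [hUfull, Finset.mem_Icc]
        have h1 := hubA (b j)
        have h2 := hubA (a j)
        omega
      by_cases hj : j = j₀
      · have hUj : U j = Ufull \ sSmall N := by simp [hU, hj]
        rw [hUj, Finset.mem_sdiff]
        refine ⟨hfull, ?_⟩
        intro hmem
        simp only [hsSmall, Finset.mem_Icc] at hmem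
        have hbig := hcrossbig i hiΔ
        rw [← hj] at hbig
        rcases abs_cases (i (b j) - i (a j)) with ⟨he, _⟩ | ⟨he, _⟩ <;> omega
      · have hUj : U j = Ufull := by simp [hU, hj]
        rw [hUj]
        exact hfull
    -- apply the aux sum lemma
    have hkey := stmt14_aux_sum n a b hbij g A U Δ hmemA hmemU
    -- bound each factor
    have hfac : ∀ j, ∑ u ∈ U j, |g j u| ≤ (if j = j₀ then T j₀ - part N else T j) := by
      intro j
      by_cases hj : j = j₀
      · subst hj
        have hUj : U j = Ufull \ sSmall N := by simp [hU]
        rw [if_pos rfl, hUj]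
        have hdisj : Disjoint (Ufull \ sSmall N) (sSmall N) := Finset.sdiff_disjoint
        have hunion : ∑ u ∈ (Ufull \ sSmall N) ∪ sSmall N, |g j u| ≤ T j :=
          Summable.sum_le_tsum _ (fun u _ => abs_nonneg _) (hg j)
        rw [Finset.sum_union hdisj] at hunion
        simp only [hpartdef]
        linarith
      · have hUj : U j = Ufull := by simp [hU, hj]
        simp only [if_neg hj, hUj]
        exact Summable.sum_le_tsum _ (fun u _ => abs_nonneg _) (hg j)
    have hprodfac : ∏ j, ∑ u ∈ U j, |g j u| ≤ (T j₀ - part N) * C := by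
      have h1 : ∏ j, ∑ u ∈ U j, |g j u| ≤
          ∏ j, (if j = j₀ then T j₀ - part N else T j) :=
        Finset.prod_le_prod (fun j _ => Finset.sum_nonneg fun u _ => abs_nonneg _)
          (fun j _ => hfac j)
      have h2 : ∏ j, (if j = j₀ then T j₀ - part N else T j) = (T j₀ - part N) * C := by
        rw [hCdef, ← Finset.mul_prod_erase Finset.univ _ (Finset.mem_univ j₀)]
        simp only [if_pos rfl]
        congr 1
        apply Finset.prod_congr rfl
        intro j hj
        rw [if_neg (Finset.mem_erase.1 hj).1]
      rw [h2] at h1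
      exact h1
    -- card bound
    have hcard : (A.card : ℝ) ≤ (N : ℝ) := by
      have hlonn : 0 ≤ lo := by
        rw [hlo]
        exact Int.floor_nonneg.2 (mul_nonneg (Nat.cast_nonneg N) hs0)
      have hhiN : hi + 1 ≤ (N : ℤ) := by
        rw [hhi]
        have : ⌊(N : ℝ) * t ⟨l - 1, hll⟩⌋ ≤ (N : ℤ) := by
          have h1 : (N : ℝ) * t ⟨l - 1, hll⟩ ≤ (N : ℝ) :=
            mul_le_of_le_one_right (Nat.cast_nonneg N) htl
          have := Int.floor_le_floor h1
          rwa [Int.floor_natCast] at this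
        omega
      have : A.card ≤ N := by
        rw [hA, Int.card_Icc]
        rw [Int.toNat_le]
        omega
      exact_mod_cast this
    -- combine
    have hTnnp : 0 ≤ (T j₀ - part N) * C :=
      mul_nonneg (by linarith [hpartle N]) hCnn
    have habs : |∑ i ∈ Δ, ∏ j, g j (i (b j) - i (a j))| ≤
        ∑ i ∈ Δ, ∏ j, |g j (i (b j) - i (a j))| := by
      refine le_trans (Finset.abs_sum_le_sum_abs _ _) ?_
      apply Finset.sum_le_sum
      intro i _
      rw [Finset.abs_prod]
    have hfinal : |∑ i ∈ Δ, ∏ j, g j (i (b j) - i (a j))| ≤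
        (N : ℝ) ^ n * ((T j₀ - part N) * C) := by
      refine le_trans habs (le_trans hkey ?_)
      have hcardpow : (A.card : ℝ) ^ n ≤ (N : ℝ) ^ n :=
        pow_le_pow_left₀ (Nat.cast_nonneg _) hcard n
      calc (A.card : ℝ) ^ n * ∏ j, ∑ u ∈ U j, |g j u|
          ≤ (A.card : ℝ) ^ n * ((T j₀ - part N) * C) := by
            apply mul_le_mul_of_nonneg_left hprodfac (pow_nonneg (Nat.cast_nonneg _) n)
        _ ≤ (N : ℝ) ^ n * ((T j₀ - part N) * C) :=
            mul_le_mul_of_nonneg_right hcardpow hTnnp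
    have hNpos : (0 : ℝ) < (N : ℝ) := by positivity
    have hNpow : (0 : ℝ) < (N : ℝ) ^ n := pow_pos hNpos n
    rw [Real.norm_eq_abs, abs_mul,
      abs_of_nonneg (le_of_lt (div_pos one_pos hNpow))]
    rw [div_mul_eq_mul_div, one_mul, div_le_iff₀ hNpow]
    calc |∑ i ∈ Δ, ∏ j, g j (i (b j) - i (a j))| ≤ (N : ℝ) ^ n * ((T j₀ - part N) * C) := hfinal
      _ = (T j₀ - part N) * C * (N : ℝ) ^ n := by ring
  · -- the bound tends to zero
    have hδ : 0 < s ⟨ℓ₀, hℓ₀l⟩ - t ⟨ℓ₀ - 1, hℓ₀l'⟩ := by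
      have h := hts ⟨ℓ₀ - 1, hℓ₀l'⟩ (show (ℓ₀ - 1) + 1 < l by omega)
      have he : (⟨(ℓ₀ - 1 : ℕ) + 1, show (ℓ₀ - 1) + 1 < l by omega⟩ : Fin l) = ⟨ℓ₀, hℓ₀l⟩ := by
        apply Fin.ext; show ℓ₀ - 1 + 1 = ℓ₀; omega
      rw [he] at h
      linarith
    set δ : ℝ := s ⟨ℓ₀, hℓ₀l⟩ - t ⟨ℓ₀ - 1, hℓ₀l'⟩ with hδdef
    have hmtop : Tendsto mval atTop atTop := by
      rw [← tendsto_intCast_atTop_iff (R := ℝ)]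
      apply tendsto_atTop_mono (f := fun N : ℕ => (N : ℝ) * δ)
      · intro N
        have h1 : (N : ℝ) * s ⟨ℓ₀, hℓ₀l⟩ - 1 < (⌊(N : ℝ) * s ⟨ℓ₀, hℓ₀l⟩⌋ : ℝ) :=
          Int.sub_one_lt_floor _
        have h2 : (⌊(N : ℝ) * t ⟨ℓ₀ - 1, hℓ₀l'⟩⌋ : ℝ) ≤ (N : ℝ) * t ⟨ℓ₀ - 1, hℓ₀l'⟩ :=
          Int.floor_le _
        simp only [hmval]
        push_cast
        rw [hδdef]
        nlinarith [Nat.cast_nonneg (α := ℝ) N]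
      · exact Tendsto.atTop_mul_const hδ tendsto_natCast_atTop_atTop
    have hfintop : Tendsto sSmall atTop (atTop : Filter (Finset ℤ)) := by
      rw [tendsto_atTop_atTop]
      intro bF
      obtain ⟨M, hM⟩ := (bF.image fun u => |u|).exists_le
      obtain ⟨i0, hi0⟩ := (tendsto_atTop_atTop.1 hmtop) (M + 1)
      refine ⟨i0, fun N hNi => ?_⟩
      intro u hu
      have hmN := hi0 N hNi
      have hMu : |u| ≤ M := hM _ (Finset.mem_image_of_mem _ hu)
      simp only [hsSmall, Finset.mem_Icc]
      rcases abs_cases u with ⟨he, _⟩ | ⟨he, _⟩ <;> omega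
    have hparttend : Tendsto part atTop (nhds (T j₀)) := by
      have hhs : Tendsto (fun F : Finset ℤ => ∑ u ∈ F, |g j₀ u|) atTop (nhds (T j₀)) :=
        (hg j₀).hasSum
      exact hhs.comp hfintop
    have : Tendsto (fun N => (T j₀ - part N) * C) atTop (nhds ((T j₀ - T j₀) * C)) :=
      (tendsto_const_nhds.sub hparttend).mul_const C
    simpa using this
end

section
/- Let d ≥ 2 be an integer and let r be a real number with 1/2 − 1/d < r < 1/2. Define c_j := Γ(j + r) / (Γ(j + 1) · Γ(r)) for integers j ≥ 1, where Γ denotes the real Gamma function. Then for every ℓ ≥ 1 the inner sum a_ℓ² := Σ_{j=ℓ}^{∞} c_j² is finite, and the series Σ_{ℓ=1}^{∞} (a_ℓ²)^{d/2} = Σ_{ℓ=1}^{∞} (Σ_{j=ℓ}^{∞} c_j²)^{d/2} diverges (equals +∞). -/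
open Real

lemma gamma_convex_ineq {x s : ℝ} (hx : 0 < x) (hs0 : 0 ≤ s) (hs1 : s ≤ 1) :
    Real.Gamma (x + s) ≤ Real.Gamma x * x ^ s := by
  have hΓx : 0 < Real.Gamma x := Real.Gamma_pos_of_pos hx
  have hΓxs : 0 < Real.Gamma (x + s) := Real.Gamma_pos_of_pos (by linarith)
  have hconv := Real.convexOn_log_Gamma.2 (Set.mem_Ioi.2 hx)
      (Set.mem_Ioi.2 (by linarith : (0:ℝ) < x + 1)) (by linarith : (0:ℝ) ≤ 1 - s) hs0
      (by ring)
  simp only [smul_eq_mul, Function.comp_apply] at hconv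
  have harg : (1 - s) * x + s * (x + 1) = x + s := by ring
  rw [harg] at hconv
  have hΓ1 : Real.Gamma (x + 1) = x * Real.Gamma x := Real.Gamma_add_one (ne_of_gt hx)
  rw [hΓ1, Real.log_mul (ne_of_gt hx) (ne_of_gt hΓx)] at hconv
  have hlog : Real.log (Real.Gamma (x + s)) ≤ Real.log (Real.Gamma x) + s * Real.log x := by
    nlinarith [hconv]
  calc Real.Gamma (x + s) = Real.exp (Real.log (Real.Gamma (x + s))) := (Real.exp_log hΓxs).symm
    _ ≤ Real.exp (Real.log (Real.Gamma x) + s * Real.log x) := Real.exp_le_exp.2 hlog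
    _ = Real.Gamma x * x ^ s := by
        rw [Real.exp_add, Real.exp_log hΓx, Real.rpow_def_of_pos hx, mul_comm (Real.log x) s]

lemma sq_rpow_aux {x : ℝ} (hx : 0 < x) (t : ℝ) : (x ^ t) ^ 2 = x ^ (2 * t) := by
  rw [sq, ← Real.rpow_add hx, two_mul]


/-- Proposition `farima_counterexample` (ii): violation of the conditional
decay condition.  For `d ≥ 2` and `1/2 − 1/d < r < 1/2`, with the FARIMA(0,r,0)
moving-average coefficients `c_j = Γ(j+r)/(Γ(j+1)Γ(r))` for `j ≥ 1`, every tail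
`a_ℓ² = Σ_{j≥ℓ} c_j²` (`ℓ ≥ 1`) is finite, while the series `Σ_{ℓ≥1} (a_ℓ²)^{d/2}`
diverges. -/
theorem stmt17 (d : ℕ) (hd : 2 ≤ d) (r : ℝ)
    (h1 : 1 / 2 - 1 / (d : ℝ) < r) (h2 : r < 1 / 2)
    (c : ℕ → ℝ)
    (hc : ∀ j : ℕ, 1 ≤ j →
      c j = Real.Gamma ((j : ℝ) + r) / (Real.Gamma ((j : ℝ) + 1) * Real.Gamma r)) :
    (∀ ℓ : ℕ, 1 ≤ ℓ → Summable fun j : ℕ => c (ℓ + j) ^ 2) ∧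
    ¬ Summable fun ℓ : ℕ => (∑' j : ℕ, c ((ℓ + 1) + j) ^ 2) ^ ((d : ℝ) / 2) := by
  have hd0 : (0:ℝ) < d := by positivity
  have hdinv : 1 / (d:ℝ) ≤ 1 / 2 := by
    apply one_div_le_one_div_of_le (by norm_num)
    exact_mod_cast hd
  have hr0 : 0 < r := by linarith
  have hG : 0 < Real.Gamma r := Real.Gamma_pos_of_pos hr0
  -- upper bound on c j
  have hupper : ∀ j : ℕ, 1 ≤ j → c j ≤ (j:ℝ) ^ (r - 1) / Real.Gamma r := by
    intro j hj
    have hjpos : (0:ℝ) < j := by exact_mod_cast hj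
    have hΓj : 0 < Real.Gamma (j:ℝ) := Real.Gamma_pos_of_pos hjpos
    have h1' : Real.Gamma ((j:ℝ) + r) ≤ Real.Gamma (j:ℝ) * (j:ℝ) ^ r :=
      gamma_convex_ineq hjpos hr0.le (by linarith)
    have hΓj1 : Real.Gamma ((j:ℝ) + 1) = (j:ℝ) * Real.Gamma (j:ℝ) :=
      Real.Gamma_add_one (ne_of_gt hjpos)
    rw [hc j hj, hΓj1, div_le_div_iff₀ (by positivity) hG]
    have hRHS : (j:ℝ) ^ (r - 1) * ((j:ℝ) * Real.Gamma (j:ℝ) * Real.Gamma r)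
        = (j:ℝ) ^ r * Real.Gamma (j:ℝ) * Real.Gamma r := by
      rw [Real.rpow_sub hjpos, Real.rpow_one]
      field_simp
    rw [hRHS]
    have := mul_le_mul_of_nonneg_right h1' hG.le
    linarith
  -- lower bound on c j
  have hlower : ∀ j : ℕ, 1 ≤ j → ((j:ℝ) + 1) ^ (r - 1) / Real.Gamma r ≤ c j := by
    intro j hj
    have hjpos : (0:ℝ) < j := by exact_mod_cast hj
    have hΓjr : 0 < Real.Gamma ((j:ℝ) + r) := Real.Gamma_pos_of_pos (by linarith)
    have hΓj1 : 0 < Real.Gamma ((j:ℝ) + 1) := Real.Gamma_pos_of_pos (by linarith)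
    have h1' : Real.Gamma ((j:ℝ) + 1) ≤ Real.Gamma ((j:ℝ) + r) * ((j:ℝ) + r) ^ (1 - r) := by
      have h := gamma_convex_ineq (x := (j:ℝ) + r) (s := 1 - r) (by linarith) (by linarith)
        (by linarith)
      have harg : (j:ℝ) + r + (1 - r) = (j:ℝ) + 1 := by ring
      rwa [harg] at h
    have h2' : ((j:ℝ) + r) ^ (1 - r) ≤ ((j:ℝ) + 1) ^ (1 - r) :=
      Real.rpow_le_rpow (by linarith) (by linarith) (by linarith)
    have h3' : Real.Gamma ((j:ℝ) + 1) ≤ Real.Gamma ((j:ℝ) + r) * ((j:ℝ) + 1) ^ (1 - r) := by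
      nlinarith
    have hprod : ((j:ℝ) + 1) ^ (1 - r) * ((j:ℝ) + 1) ^ (r - 1) = 1 := by
      rw [← Real.rpow_add (by linarith)]
      norm_num
    rw [hc j hj, div_le_div_iff₀ hG (by positivity)]
    calc ((j:ℝ) + 1) ^ (r - 1) * (Real.Gamma ((j:ℝ) + 1) * Real.Gamma r)
        ≤ ((j:ℝ) + 1) ^ (r - 1) *
            ((Real.Gamma ((j:ℝ) + r) * ((j:ℝ) + 1) ^ (1 - r)) * Real.Gamma r) := by
          apply mul_le_mul_of_nonneg_left _ (by positivity)
          exact mul_le_mul_of_nonneg_right h3' hG.le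
      _ = (((j:ℝ) + 1) ^ (1 - r) * ((j:ℝ) + 1) ^ (r - 1)) *
            (Real.Gamma ((j:ℝ) + r) * Real.Gamma r) := by ring
      _ = Real.Gamma ((j:ℝ) + r) * Real.Gamma r := by rw [hprod, one_mul]
  have hcpos : ∀ j : ℕ, 1 ≤ j → 0 < c j := by
    intro j hj
    calc (0:ℝ) < ((j:ℝ) + 1) ^ (r - 1) / Real.Gamma r := by positivity
      _ ≤ c j := hlower j hj
  -- summability of each tail
  have hsum : ∀ ℓ : ℕ, 1 ≤ ℓ → Summable fun j : ℕ => c (ℓ + j) ^ 2 := by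
    intro ℓ hℓ
    have hmaj : Summable fun j : ℕ => (((j:ℝ) + 1) ^ (2 * (r - 1))) / Real.Gamma r ^ 2 := by
      apply Summable.div_const
      have h0 : Summable fun n : ℕ => (n:ℝ) ^ (2 * (r - 1)) :=
        Real.summable_nat_rpow.2 (by linarith)
      have h1 := (summable_nat_add_iff 1).2 h0
      simpa using h1
    apply Summable.of_nonneg_of_le (fun j => sq_nonneg _) _ hmaj
    intro j
    have hj1 : 1 ≤ ℓ + j := le_add_right hℓ
    have hle : c (ℓ + j) ≤ ((ℓ + j : ℕ):ℝ) ^ (r - 1) / Real.Gamma r := hupper _ hj1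
    have hle2 : ((ℓ + j : ℕ):ℝ) ^ (r - 1) ≤ ((j:ℝ) + 1) ^ (r - 1) := by
      apply Real.rpow_le_rpow_of_nonpos (by positivity)
      · push_cast
        have : (1:ℝ) ≤ ℓ := by exact_mod_cast hℓ
        linarith
      · linarith
    have hb : c (ℓ + j) ≤ ((j:ℝ) + 1) ^ (r - 1) / Real.Gamma r := by
      refine hle.trans ?_
      gcongr
    calc c (ℓ + j) ^ 2 ≤ (((j:ℝ) + 1) ^ (r - 1) / Real.Gamma r) ^ 2 :=
          pow_le_pow_left₀ (hcpos _ hj1).le hb 2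
      _ = ((j:ℝ) + 1) ^ (2 * (r - 1)) / Real.Gamma r ^ 2 := by
          rw [div_pow, sq_rpow_aux (by positivity)]
  refine ⟨hsum, ?_⟩
  -- divergence
  intro hS
  set e : ℝ := (2 * r - 1) * ((d:ℝ) / 2) with he
  have he1 : -1 < e := by
    have h' : 1 / (d:ℝ) * (d:ℝ) = 1 := by field_simp
    have hlt : (1 / 2 - 1 / (d:ℝ)) * (d:ℝ) < r * (d:ℝ) :=
      mul_lt_mul_of_pos_right h1 hd0
    rw [sub_mul, h'] at hlt
    rw [he]
    nlinarith
  set K : ℝ := ((2:ℝ) ^ (2 * (r - 1)) / Real.Gamma r ^ 2) ^ ((d:ℝ) / 2) with hK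
  have hKpos : 0 < K := by rw [hK]; positivity
  have htail : ∀ ℓ : ℕ,
      K * ((ℓ + 1 : ℕ):ℝ) ^ e ≤ (∑' j : ℕ, c ((ℓ + 1) + j) ^ 2) ^ ((d : ℝ) / 2) := by
    intro ℓ
    set L : ℕ := ℓ + 1 with hL
    have hL1 : 1 ≤ L := Nat.le_add_left 1 ℓ
    have hLpos : (0:ℝ) < (L:ℝ) := by exact_mod_cast hL1
    have hsumL := hsum L hL1
    have hterm : ∀ j ∈ Finset.range L,
        ((2:ℝ) * (L:ℝ)) ^ (2 * (r - 1)) / Real.Gamma r ^ 2 ≤ c (L + j) ^ 2 := by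
      intro j hj
      have hjL : j < L := Finset.mem_range.1 hj
      have hj1 : 1 ≤ L + j := le_add_right hL1
      have hlo : (((L + j : ℕ):ℝ) + 1) ^ (r - 1) / Real.Gamma r ≤ c (L + j) := hlower _ hj1
      have hbase : (((L + j : ℕ):ℝ) + 1) ≤ 2 * (L:ℝ) := by
        have hcast : ((L + j : ℕ):ℝ) = (L:ℝ) + (j:ℝ) := by push_cast; ring
        have hj' : (j:ℝ) + 1 ≤ (L:ℝ) := by exact_mod_cast hjL
        rw [hcast]; linarith
      have hlo2 : ((2:ℝ) * (L:ℝ)) ^ (r - 1) ≤ (((L + j : ℕ):ℝ) + 1) ^ (r - 1) :=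
        Real.rpow_le_rpow_of_nonpos (by positivity) hbase (by linarith)
      have hlo3 : ((2:ℝ) * (L:ℝ)) ^ (r - 1) / Real.Gamma r ≤ c (L + j) := by
        refine le_trans ?_ hlo
        gcongr
      have hnn : 0 ≤ ((2:ℝ) * (L:ℝ)) ^ (r - 1) / Real.Gamma r := by positivity
      calc ((2:ℝ) * (L:ℝ)) ^ (2 * (r - 1)) / Real.Gamma r ^ 2
          = (((2:ℝ) * (L:ℝ)) ^ (r - 1) / Real.Gamma r) ^ 2 := by
            rw [div_pow, sq_rpow_aux (by positivity)]
        _ ≤ c (L + j) ^ 2 := pow_le_pow_left₀ hnn hlo3 2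
    have hfin : (L:ℝ) * (((2:ℝ) * (L:ℝ)) ^ (2 * (r - 1)) / Real.Gamma r ^ 2)
        ≤ ∑ j ∈ Finset.range L, c (L + j) ^ 2 := by
      have h := Finset.sum_le_sum hterm
      simpa [Finset.sum_const, nsmul_eq_mul] using h
    have hts : ∑ j ∈ Finset.range L, c (L + j) ^ 2 ≤ ∑' j : ℕ, c (L + j) ^ 2 :=
      Summable.sum_le_tsum _ (fun i _ => sq_nonneg _) hsumL
    have hmain : (2:ℝ) ^ (2 * (r - 1)) / Real.Gamma r ^ 2 * (L:ℝ) ^ (2 * r - 1)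
        ≤ ∑' j : ℕ, c (L + j) ^ 2 := by
      refine le_trans (le_of_eq ?_) (hfin.trans hts)
      rw [Real.mul_rpow (by norm_num) hLpos.le]
      rw [show (2 * r - 1 : ℝ) = 1 + 2 * (r - 1) by ring, Real.rpow_add hLpos,
        Real.rpow_one]
      ring
    have hxnn : (0:ℝ) ≤ (2:ℝ) ^ (2 * (r - 1)) / Real.Gamma r ^ 2 * (L:ℝ) ^ (2 * r - 1) := by
      positivity
    have hmono := Real.rpow_le_rpow hxnn hmain (by positivity : (0:ℝ) ≤ (d:ℝ) / 2)
    refine le_trans (le_of_eq ?_) hmono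
    rw [Real.mul_rpow (by positivity) (Real.rpow_nonneg hLpos.le _),
      ← Real.rpow_mul hLpos.le]
  have hsum2 : Summable fun ℓ : ℕ => K * ((ℓ + 1 : ℕ):ℝ) ^ e :=
    Summable.of_nonneg_of_le (fun ℓ => by positivity) htail hS
  have hsum3 : Summable fun ℓ : ℕ => ((ℓ + 1 : ℕ):ℝ) ^ e := by
    have h := hsum2.mul_left K⁻¹
    simpa [← mul_assoc, inv_mul_cancel₀ (ne_of_gt hKpos)] using h
  have hsum4 : Summable fun n : ℕ => (n:ℝ) ^ e := (summable_nat_add_iff 1).1 hsum3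
  have := Real.summable_nat_rpow.1 hsum4
  linarith
end

section
/- Let d ≥ 1 be an integer, let (a_q)_{q≥d} and (b_q)_{q≥d} be real sequences with A := Σ_{q≥d} q!·a_q² < ∞ and B := Σ_{q≥d} q!·b_q² < ∞, and let ρ : ℤ → ℝ satisfy |ρ(u)| ≤ 1 for all u and Σ_{u∈ℤ} |ρ(u)|^d < ∞. Define Δ(u) := Σ_{q=d}^{∞} q!·a_q·b_q·ρ(u)^q and, for M ≥ d, Δ^M(u) := Σ_{q=d}^{M} q!·a_q·b_q·ρ(u)^q. Then the antisymmetrized series 𝔸 := (1/2) Σ_{u=1}^{∞} (Δ(u) − Δ(−u)) and 𝔸^M := (1/2) Σ_{u=1}^{∞} (Δ^M(u) − Δ^M(−u)) converge absolutely, one has the bound |𝔸^M − 𝔸| ≤ (Σ_{q>M} q!·a_q²)^{1/2} · (Σ_{q>M} q!·b_q²)^{1/2} · Σ_{u∈ℤ} |ρ(u)|^d, and consequently 𝔸^M → 𝔸 as M → ∞. -/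
/-!
Because `|ρ| ≤ 1` and only powers `q ≥ d` occur, a tail `Σ_{q ≥ k} q! a_q b_q ρ(u)^q` with
`k ≥ d` is bounded by `(Σ_{q ≥ k} q! |a_q b_q|) |ρ(u)|^d`, and by Cauchy–Schwarz the
coefficient sum is at most the product of the square roots of the tails of `Σ q! a_q²` and
`Σ q! b_q²`. Now `Δ − Δ^M` is the tail with `k = M + 1`, and the antisymmetrized sum over
`u ≥ 1` of a function `f` with `|f| ≤ h` is bounded by `Σ_{u ∈ ℤ} h(u)`. The tails tend to zero.
-/

open Filter Topology

section CauchySchwarz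

variable {ι : Type*} {w f g : ι → ℝ}

theorem summable_and_tsum_mul_abs_mul_abs_le (hw : ∀ i, 0 ≤ w i)
    (hf : Summable fun i => w i * f i ^ 2) (hg : Summable fun i => w i * g i ^ 2) :
    (Summable fun i => w i * |f i| * |g i|) ∧
      ∑' i, w i * |f i| * |g i| ≤ √(∑' i, w i * f i ^ 2) * √(∑' i, w i * g i ^ 2) := by
  have hsq (h : ι → ℝ) :
      (fun i => (√(w i) * |h i|) ^ (2 : ℝ)) = fun i => w i * h i ^ 2 := by
    funext i
    rw [Real.rpow_two, mul_pow, Real.sq_sqrt (hw i), sq_abs]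
  have hmul : (fun i => √(w i) * |f i| * (√(w i) * |g i|)) = fun i => w i * |f i| * |g i| := by
    funext i
    rw [mul_mul_mul_comm, Real.mul_self_sqrt (hw i), mul_assoc]
  have := Real.summable_and_inner_le_Lp_mul_Lq_tsum_of_nonneg Real.HolderConjugate.two_two
    (f := fun i => √(w i) * |f i|) (g := fun i => √(w i) * |g i|)
    (fun i => by positivity) (fun i => by positivity) (by rwa [hsq]) (by rwa [hsq])
  rwa [hsq, hsq, hmul, ← Real.sqrt_eq_rpow, ← Real.sqrt_eq_rpow] at this

end CauchySchwarz

theorem Summable.nat_add_of_le {f : ℕ → ℝ} {d k : ℕ} (hf : Summable fun q => f (q + d))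
    (hdk : d ≤ k) : Summable fun q => f (q + k) := by
  simpa only [add_assoc, Nat.sub_add_cancel hdk] using (summable_nat_add_iff (k - d)).2 hf

theorem tsum_nat_add_eq_sum_Icc_add_tsum {G : Type*} [AddCommGroup G] [TopologicalSpace G]
    [IsTopologicalAddGroup G] [T2Space G] {f : ℕ → G} {d M : ℕ}
    (hf : Summable fun q => f (q + d)) (hdM : d ≤ M + 1) :
    ∑' q, f (q + d) = ∑ q ∈ Finset.Icc d M, f q + ∑' q, f (q + (M + 1)) := by
  rw [← hf.sum_add_tsum_nat_add (M + 1 - d), ← Finset.Ico_add_one_right_eq_Icc,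
    Finset.sum_Ico_eq_sum_range]
  simp only [add_assoc, Nat.sub_add_cancel hdM, add_comm d]

section PowerBounds

variable {c : ℕ → ℝ} {x : ℝ} {d : ℕ}

theorem abs_mul_pow_le_of_le {c : ℝ} {n : ℕ} (hx : |x| ≤ 1) (hdn : d ≤ n) :
    |c * x ^ n| ≤ |c| * |x| ^ d := by
  rw [abs_mul, abs_pow]
  exact mul_le_mul_of_nonneg_left (pow_le_pow_of_le_one (abs_nonneg x) hx hdn) (abs_nonneg c)

theorem abs_sum_mul_pow_le {s : Finset ℕ} (hx : |x| ≤ 1) (hs : ∀ q ∈ s, d ≤ q) :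
    |∑ q ∈ s, c q * x ^ q| ≤ (∑ q ∈ s, |c q|) * |x| ^ d := by
  rw [Finset.sum_mul]
  exact (Finset.abs_sum_le_sum_abs _ _).trans
    (Finset.sum_le_sum fun q hq => abs_mul_pow_le_of_le hx (hs q hq))

theorem summable_mul_pow_nat_add {k : ℕ} (hx : |x| ≤ 1) (hc : Summable fun q => |c (q + k)|) :
    Summable fun q => c (q + k) * x ^ (q + k) :=
  (hc.mul_right (|x| ^ k)).of_norm_bounded fun _ => abs_mul_pow_le_of_le hx (Nat.le_add_left _ _)

theorem abs_tsum_mul_pow_nat_add_le {k : ℕ} (hx : |x| ≤ 1) (hdk : d ≤ k)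
    (hc : Summable fun q => |c (q + k)|) :
    |∑' q, c (q + k) * x ^ (q + k)| ≤ (∑' q, |c (q + k)|) * |x| ^ d := by
  rw [← Real.norm_eq_abs]
  exact tsum_of_norm_bounded (hc.hasSum.mul_right _) fun _ => abs_mul_pow_le_of_le hx (by omega)

end PowerBounds

section Antisymmetric

variable {f h : ℤ → ℝ}

theorem Summable.comp_nat_add_one (hh : Summable h) : Summable fun n : ℕ => h (n + 1) :=
  hh.comp_injective fun m n hmn => by simpa using hmn

theorem Summable.comp_neg_nat_add_one (hh : Summable h) : Summable fun n : ℕ => h (-(n + 1)) :=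
  hh.comp_injective fun m n hmn => by simpa using hmn

theorem abs_sub_neg_le_add (hfh : ∀ u, |f u| ≤ h u) (n : ℕ) :
    |f (n + 1) - f (-(n + 1))| ≤ h (n + 1) + h (-(n + 1)) :=
  (abs_sub _ _).trans (add_le_add (hfh _) (hfh _))

theorem summable_abs_sub_neg_of_abs_le (hh : Summable h) (hfh : ∀ u, |f u| ≤ h u) :
    Summable fun n : ℕ => |f (n + 1) - f (-(n + 1))| :=
  (hh.comp_nat_add_one.add hh.comp_neg_nat_add_one).of_nonneg_of_le (fun _ => abs_nonneg _)
    (abs_sub_neg_le_add hfh)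

theorem abs_tsum_sub_neg_le (hh : Summable h) (hfh : ∀ u, |f u| ≤ h u) :
    |∑' n : ℕ, (f (n + 1) - f (-(n + 1)))| ≤ ∑' u, h u := by
  have hpos := hh.comp_nat_add_one
  have hneg := hh.comp_neg_nat_add_one
  calc |∑' n : ℕ, (f (n + 1) - f (-(n + 1)))|
      ≤ ∑' n : ℕ, h (n + 1) + ∑' n : ℕ, h (-(n + 1)) := by
        rw [← Real.norm_eq_abs]
        exact tsum_of_norm_bounded (hpos.hasSum.add hneg.hasSum) (abs_sub_neg_le_add hfh)
    _ ≤ ∑' n : ℕ, h (n + 1) + h 0 + ∑' n : ℕ, h (-(n + 1)) := by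
        linarith [(abs_nonneg (f 0)).trans (hfh 0)]
    _ = ∑' u, h u := (tsum_of_add_one_of_neg_add_one hpos hneg).symm

theorem abs_half_tsum_sub_neg_sub_le {g : ℤ → ℝ} {C : ℝ}
    (hf : Summable fun n : ℕ => |f (n + 1) - f (-(n + 1))|)
    (hg : Summable fun n : ℕ => |g (n + 1) - g (-(n + 1))|)
    (hh : Summable h) (hfgh : ∀ u, |f u - g u| ≤ C * h u) :
    |1 / 2 * ∑' n : ℕ, (f (n + 1) - f (-(n + 1))) -
        1 / 2 * ∑' n : ℕ, (g (n + 1) - g (-(n + 1)))| ≤ C * ∑' u, h u := by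
  have hsub : ∑' n : ℕ, (f (n + 1) - f (-(n + 1))) - ∑' n : ℕ, (g (n + 1) - g (-(n + 1)))
      = ∑' n : ℕ, ((f - g) (n + 1) - (f - g) (-(n + 1))) := by
    rw [← hf.of_abs.tsum_sub hg.of_abs]
    exact tsum_congr fun n => by simp only [Pi.sub_apply]; ring
  rw [← mul_sub, hsub, abs_mul, abs_of_pos one_half_pos, ← tsum_mul_left]
  linarith [abs_tsum_sub_neg_le (f := f - g) (hh.mul_left C) hfgh,
    abs_nonneg (∑' n : ℕ, ((f - g) (n + 1) - (f - g) (-(n + 1))))]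

end Antisymmetric

theorem tendsto_of_abs_sub_le_sqrt_mul_sqrt_tsum_nat_add {x : ℕ → ℝ} {L S : ℝ}
    {F G : ℕ → ℝ} {d : ℕ} (h : ∀ M, d ≤ M →
      |x M - L| ≤ √(∑' q, F (q + (M + 1))) * √(∑' q, G (q + (M + 1))) * S) :
    Tendsto x atTop (𝓝 L) := by
  have htail (F : ℕ → ℝ) : Tendsto (fun M => ∑' q, F (q + (M + 1))) atTop (𝓝 0) :=
    (tendsto_sum_nat_add F).comp (tendsto_add_atTop_nat 1)
  have hbound := ((htail F).sqrt.mul (htail G).sqrt).mul_const S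
  rw [Real.sqrt_zero, zero_mul, zero_mul] at hbound
  refine tendsto_iff_norm_sub_tendsto_zero.2 (squeeze_zero' (Eventually.of_forall fun _ =>
    norm_nonneg _) ?_ hbound)
  filter_upwards [eventually_ge_atTop d] with M hM
  exact h M hM

theorem summable_and_tsum_abs_factorial_mul_le {a b : ℕ → ℝ} {d k : ℕ}
    (ha : Summable fun q : ℕ => ((q + d).factorial : ℝ) * a (q + d) ^ 2)
    (hb : Summable fun q : ℕ => ((q + d).factorial : ℝ) * b (q + d) ^ 2) (hdk : d ≤ k) :
    (Summable fun q => |((q + k).factorial : ℝ) * a (q + k) * b (q + k)|) ∧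
      ∑' q, |((q + k).factorial : ℝ) * a (q + k) * b (q + k)| ≤
        √(∑' q : ℕ, ((q + k).factorial : ℝ) * a (q + k) ^ 2) *
          √(∑' q : ℕ, ((q + k).factorial : ℝ) * b (q + k) ^ 2) := by
  have ha' := ha.nat_add_of_le (f := fun q => (q.factorial : ℝ) * a q ^ 2) hdk
  have hb' := hb.nat_add_of_le (f := fun q => (q.factorial : ℝ) * b q ^ 2) hdk
  simpa only [abs_mul, Nat.abs_cast] using
    summable_and_tsum_mul_abs_mul_abs_le (fun q => Nat.cast_nonneg _) ha' hb'

theorem stmt19_general (d : ℕ) (a b : ℕ → ℝ)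
    (ha : Summable fun q : ℕ => ((q + d).factorial : ℝ) * a (q + d) ^ 2)
    (hb : Summable fun q : ℕ => ((q + d).factorial : ℝ) * b (q + d) ^ 2)
    (ρ : ℤ → ℝ) (hρ1 : ∀ u, |ρ u| ≤ 1)
    (hρd : Summable fun u : ℤ => |ρ u| ^ d)
    (Δ : ℤ → ℝ)
    (hΔ : ∀ u, Δ u = ∑' q : ℕ, ((q + d).factorial : ℝ) * a (q + d) * b (q + d) * ρ u ^ (q + d))
    (ΔM : ℕ → ℤ → ℝ)
    (hΔM : ∀ M u, ΔM M u = ∑ q ∈ Finset.Icc d M, (q.factorial : ℝ) * a q * b q * ρ u ^ q)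
    (A : ℝ) (hA : A = (1 / 2) * ∑' u : ℕ, (Δ ((u : ℤ) + 1) - Δ (-((u : ℤ) + 1))))
    (AM : ℕ → ℝ)
    (hAM : ∀ M, AM M = (1 / 2) * ∑' u : ℕ, (ΔM M ((u : ℤ) + 1) - ΔM M (-((u : ℤ) + 1)))) :
    (Summable fun u : ℕ => |Δ ((u : ℤ) + 1) - Δ (-((u : ℤ) + 1))|) ∧
    (∀ M : ℕ, Summable fun u : ℕ => |ΔM M ((u : ℤ) + 1) - ΔM M (-((u : ℤ) + 1))|) ∧
    (∀ M : ℕ, d ≤ M →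
      |AM M - A| ≤
        Real.sqrt (∑' q : ℕ, ((q + (M + 1)).factorial : ℝ) * a (q + (M + 1)) ^ 2) *
          Real.sqrt (∑' q : ℕ, ((q + (M + 1)).factorial : ℝ) * b (q + (M + 1)) ^ 2) *
          ∑' u : ℤ, |ρ u| ^ d) ∧
    Tendsto AM atTop (nhds A) := by
  set c : ℕ → ℝ := fun q => (q.factorial : ℝ) * a q * b q
  have hc (k : ℕ) (hk : d ≤ k) := summable_and_tsum_abs_factorial_mul_le ha hb hk
  have hΔ_le (u : ℤ) : |Δ u| ≤ (∑' q, |c (q + d)|) * |ρ u| ^ d :=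
    hΔ u ▸ abs_tsum_mul_pow_nat_add_le (c := c) (hρ1 u) le_rfl (hc d le_rfl).1
  have hΔM_le (M : ℕ) (u : ℤ) : |ΔM M u| ≤ (∑ q ∈ Finset.Icc d M, |c q|) * |ρ u| ^ d :=
    hΔM M u ▸ abs_sum_mul_pow_le (c := c) (hρ1 u) fun q hq => (Finset.mem_Icc.mp hq).1
  have htail_le (M : ℕ) (hM : d ≤ M) (u : ℤ) :
      |Δ u - ΔM M u| ≤ (∑' q, |c (q + (M + 1))|) * |ρ u| ^ d := by
    have hsum := summable_mul_pow_nat_add (c := c) (k := d) (hρ1 u) (hc d le_rfl).1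
    rw [hΔ u, hΔM M u, tsum_nat_add_eq_sum_Icc_add_tsum (f := fun q => c q * ρ u ^ q) (M := M)
      hsum (by omega), add_sub_cancel_left]
    exact abs_tsum_mul_pow_nat_add_le (c := c) (d := d) (hρ1 u) (by omega)
      (hc (M + 1) (by omega)).1
  have hA_summable := summable_abs_sub_neg_of_abs_le (hρd.mul_left _) hΔ_le
  have hAM_summable (M : ℕ) := summable_abs_sub_neg_of_abs_le (hρd.mul_left _) (hΔM_le M)
  have hAM_sub_le (M : ℕ) (hM : d ≤ M) : |AM M - A| ≤
      √(∑' q : ℕ, ((q + (M + 1)).factorial : ℝ) * a (q + (M + 1)) ^ 2) *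
        √(∑' q : ℕ, ((q + (M + 1)).factorial : ℝ) * b (q + (M + 1)) ^ 2) *
        ∑' u : ℤ, |ρ u| ^ d := by
    rw [abs_sub_comm, hA, hAM]
    exact (abs_half_tsum_sub_neg_sub_le hA_summable (hAM_summable M) hρd (htail_le M hM)).trans
      (mul_le_mul_of_nonneg_right (hc (M + 1) (by omega)).2 (tsum_nonneg fun u => by positivity))
  exact ⟨hA_summable, hAM_summable, hAM_sub_le,
    tendsto_of_abs_sub_le_sqrt_mul_sqrt_tsum_nat_add (F := fun q => (q.factorial : ℝ) * a q ^ 2)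
      (G := fun q => (q.factorial : ℝ) * b q ^ 2) hAM_sub_le⟩

/-- convergence of the antisymmetric area correction, Corollary
`convergence_AA`.  With `Δ(u) = Σ_{q≥d} q! a_q b_q ρ(u)^q`, truncations
`Δ^M(u) = Σ_{q=d}^M q! a_q b_q ρ(u)^q`, `𝔸 = (1/2) Σ_{u≥1} (Δ(u) − Δ(−u))` and its analogue
`𝔸^M`: both antisymmetrized series converge absolutely,
`|𝔸^M − 𝔸| ≤ (Σ_{q>M} q! a_q²)^{1/2} (Σ_{q>M} q! b_q²)^{1/2} Σ_{u∈ℤ} |ρ(u)|^d`,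
and consequently `𝔸^M → 𝔸` as `M → ∞`. -/
theorem stmt19 (d : ℕ) (hd : 1 ≤ d) (a b : ℕ → ℝ)
    (ha : Summable fun q : ℕ => ((q + d).factorial : ℝ) * a (q + d) ^ 2)
    (hb : Summable fun q : ℕ => ((q + d).factorial : ℝ) * b (q + d) ^ 2)
    (ρ : ℤ → ℝ) (hρ1 : ∀ u, |ρ u| ≤ 1)
    (hρd : Summable fun u : ℤ => |ρ u| ^ d)
    (Δ : ℤ → ℝ)
    (hΔ : ∀ u, Δ u = ∑' q : ℕ, ((q + d).factorial : ℝ) * a (q + d) * b (q + d) * ρ u ^ (q + d))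
    (ΔM : ℕ → ℤ → ℝ)
    (hΔM : ∀ M u, ΔM M u = ∑ q ∈ Finset.Icc d M, (q.factorial : ℝ) * a q * b q * ρ u ^ q)
    (A : ℝ) (hA : A = (1 / 2) * ∑' u : ℕ, (Δ ((u : ℤ) + 1) - Δ (-((u : ℤ) + 1))))
    (AM : ℕ → ℝ)
    (hAM : ∀ M, AM M = (1 / 2) * ∑' u : ℕ, (ΔM M ((u : ℤ) + 1) - ΔM M (-((u : ℤ) + 1)))) :
    (Summable fun u : ℕ => |Δ ((u : ℤ) + 1) - Δ (-((u : ℤ) + 1))|) ∧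
    (∀ M : ℕ, Summable fun u : ℕ => |ΔM M ((u : ℤ) + 1) - ΔM M (-((u : ℤ) + 1))|) ∧
    (∀ M : ℕ, d ≤ M →
      |AM M - A| ≤
        Real.sqrt (∑' q : ℕ, ((q + (M + 1)).factorial : ℝ) * a (q + (M + 1)) ^ 2) *
          Real.sqrt (∑' q : ℕ, ((q + (M + 1)).factorial : ℝ) * b (q + (M + 1)) ^ 2) *
          ∑' u : ℤ, |ρ u| ^ d) ∧
    Tendsto AM atTop (nhds A) :=
  stmt19_general d a b ha hb ρ hρ1 hρd Δ hΔ ΔM hΔM A hA AM hAM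
end
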